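/- arXiv:1610.03810 — 11 statements merged into one kernel-verified Lean document; each statement's English description precedes it below -/
import Mathlib

section
/- Let G be a finite group and let F and Γ be subgroups of G such that |G| = |F|·|Γ| and gcd(|F|, |Γ|) = 1. Let ω be a 3-cocycle on G with values in kˣ. If the restriction of ω to F×F×F is a coboundary on F and the restriction of ω to Γ×Γ×Γ is a coboundary on Γ, then ω is a coboundary on G (i.e., its class in H³(G, kˣ) is trivial). -/
/-- A 3-cocycle on a group `G` with values in `kˣ` (trivial action). -/
def IsCocycle3 {k : Type*} [Field k] {G : Type*} [Group G] (ω : G → G → G → kˣ) : Prop :=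
  ∀ x y z w : G, ω y z w * ω x (y * z) w * ω x y z = ω (x * y) z w * ω x y (z * w)

/-- A 3-coboundary on a group `G` with values in `kˣ` (trivial action);
equivalently, the class in `H³(G, kˣ)` is trivial. -/
def IsCoboundary3 {k : Type*} [Field k] {G : Type*} [Group G] (ω : G → G → G → kˣ) : Prop :=
  ∃ t : G → G → kˣ, ∀ x y z : G,
    ω x y z = t y z * t x (y * z) * (t (x * y) z)⁻¹ * (t x y)⁻¹

section Helpers

variable {k : Type*} [Field k] {G : Type*} [Group G]

/-- Homogeneous (additive) version of a 3-cochain. -/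
private def Om (ω : G → G → G → kˣ) (a b c d : G) : Additive kˣ :=
  Additive.ofMul (ω (a⁻¹ * b) (b⁻¹ * c) (c⁻¹ * d))

private lemma Om_coc {ω : G → G → G → kˣ} (hω : IsCocycle3 ω) (v0 v1 v2 v3 v4 : G) :
    Om ω v1 v2 v3 v4 + Om ω v0 v1 v3 v4 + Om ω v0 v1 v2 v3
      = Om ω v0 v2 v3 v4 + Om ω v0 v1 v2 v4 := by
  have h := hω (v0⁻¹ * v1) (v1⁻¹ * v2) (v2⁻¹ * v3) (v3⁻¹ * v4)
  simp only [mul_assoc, mul_inv_cancel_left] at h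
  simp only [Om, ← ofMul_mul]
  exact congrArg Additive.ofMul (by rw [mul_assoc]; exact h)

private lemma Om_inv (ω : G → G → G → kˣ) (g a b c d : G) :
    Om ω (g * a) (g * b) (g * c) (g * d) = Om ω a b c d := by
  simp [Om, mul_inv_rev, mul_assoc, inv_mul_cancel_left]

/-- prism homotopy 2-cochain -/
private def hOm (ω : G → G → G → kˣ) (σ : G → G) (a b c : G) : Additive kˣ :=
  Om ω a (σ a) (σ b) (σ c) - Om ω a b (σ b) (σ c) + Om ω a b c (σ c)

private lemma prism {ω : G → G → G → kˣ} (hω : IsCocycle3 ω) (σ : G → G) (a b c d : G) :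
    hOm ω σ b c d - hOm ω σ a c d + hOm ω σ a b d - hOm ω σ a b c
      = Om ω (σ a) (σ b) (σ c) (σ d) - Om ω a b c d := by
  have C1 := Om_coc hω a (σ a) (σ b) (σ c) (σ d)
  have C2 := Om_coc hω a b (σ b) (σ c) (σ d)
  have C3 := Om_coc hω a b c (σ c) (σ d)
  have C4 := Om_coc hω a b c d (σ d)
  have e1 := sub_eq_zero_of_eq C1
  have e2 := sub_eq_zero_of_eq C2
  have e3 := sub_eq_zero_of_eq C3
  have e4 := sub_eq_zero_of_eq C4
  have key : (hOm ω σ b c d - hOm ω σ a c d + hOm ω σ a b d - hOm ω σ a b c)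
      - (Om ω (σ a) (σ b) (σ c) (σ d) - Om ω a b c d)
      = -(Om ω (σ a) (σ b) (σ c) (σ d) + Om ω a (σ a) (σ c) (σ d) + Om ω a (σ a) (σ b) (σ c)
            - (Om ω a (σ b) (σ c) (σ d) + Om ω a (σ a) (σ b) (σ d)))
        + (Om ω b (σ b) (σ c) (σ d) + Om ω a b (σ c) (σ d) + Om ω a b (σ b) (σ c)
            - (Om ω a (σ b) (σ c) (σ d) + Om ω a b (σ b) (σ d)))
        - (Om ω b c (σ c) (σ d) + Om ω a b (σ c) (σ d) + Om ω a b c (σ c)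
            - (Om ω a c (σ c) (σ d) + Om ω a b c (σ d)))
        + (Om ω b c d (σ d) + Om ω a b d (σ d) + Om ω a b c d
            - (Om ω a c d (σ d) + Om ω a b c (σ d))) := by
    simp only [hOm]
    abel
  rw [e1, e2, e3, e4] at key
  simp only [neg_zero, add_zero, sub_zero, zero_add, zero_sub, sub_neg_eq_add] at key
  exact sub_eq_zero.mp (by simpa using key)

private lemma transfer_aux [Finite G] (F Γ : Subgroup G)
    (hb : Function.Bijective (fun fγ : F × Γ => (fγ.1 : G) * (fγ.2 : G)))
    (ω : G → G → G → kˣ) (hω : IsCocycle3 ω)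
    (hF : IsCoboundary3 (fun x y z : F => ω x y z)) :
    IsCoboundary3 (fun x y z : G => ω x y z ^ (Nat.card Γ)) := by
  classical
  obtain ⟨t, ht⟩ := hF
  have : Fintype Γ := Fintype.ofFinite Γ
  set μ : F × Γ → G := fun fγ => (fγ.1 : G) * (fγ.2 : G) with hμ
  set e : F × Γ ≃ G := Equiv.ofBijective μ hb with he
  set P : G → F := fun g => (e.symm g).1 with hP
  set Q : G → Γ := fun g => (e.symm g).2 with hQ
  have hPQ : ∀ g : G, (P g : G) * (Q g : G) = g := by
    intro g
    have : μ (e.symm g) = g := e.apply_symm_apply g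
    simpa [hμ, hP, hQ] using this
  have huniq : ∀ (f : F) (γ : Γ) (g : G), (f : G) * (γ : G) = g → P g = f ∧ Q g = γ := by
    intro f γ g hg
    have h1 : e ⟨f, γ⟩ = g := hg
    have h2 : e.symm g = ⟨f, γ⟩ := by rw [← h1, Equiv.symm_apply_apply]
    constructor <;> simp [hP, hQ, h2]
  have hPf : ∀ (f : F) (g : G), P ((f : G) * g) = f * P g := by
    intro f g
    exact (huniq (f * P g) (Q g) ((f : G) * g)
      (by push_cast; rw [mul_assoc, hPQ g])).1
  have hQf : ∀ (f : F) (g : G), Q ((f : G) * g) = Q g := by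
    intro f g
    exact (huniq (f * P g) (Q g) ((f : G) * g)
      (by push_cast; rw [mul_assoc, hPQ g])).2
  have htriv : ∀ g : G, g ∈ F → g ∈ Γ → g = 1 := by
    intro g hgF hgΓ
    have h1 : μ (⟨g, hgF⟩, (1 : Γ)) = μ ((1 : F), ⟨g, hgΓ⟩) := by simp [hμ]
    have h2 := hb.injective h1
    have h3 := congrArg (fun p : F × Γ => (p.1 : G)) h2
    simpa using h3
  set σ : G → G := fun g => (P g : G) with hσ
  have hσf : ∀ (f : F) (g : G), σ ((f : G) * g) = (f : G) * σ g := by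
    intro f g; simp [hσ, hPf f g]
  -- the 2-cochain from hF, transported along P
  set TF : F → F → F → Additive kˣ :=
    fun a b c => Additive.ofMul (t (a⁻¹ * b) (b⁻¹ * c)) with hTFdef
  have hTF : ∀ f0 f1 f2 f3 : F,
      Om ω (f0 : G) (f1 : G) (f2 : G) (f3 : G)
        = TF f1 f2 f3 - TF f0 f2 f3 + TF f0 f1 f3 - TF f0 f1 f2 := by
    intro f0 f1 f2 f3
    have h := ht (f0⁻¹ * f1) (f1⁻¹ * f2) (f2⁻¹ * f3)
    simp only [mul_assoc, mul_inv_cancel_left] at h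
    have h2 : Om ω (f0 : G) (f1 : G) (f2 : G) (f3 : G)
        = Additive.ofMul (ω ((f0 : G)⁻¹ * f1) ((f1 : G)⁻¹ * f2) ((f2 : G)⁻¹ * f3)) := rfl
    rw [h2]
    have hc : ω ((f0 : G)⁻¹ * f1) ((f1 : G)⁻¹ * f2) ((f2 : G)⁻¹ * f3)
        = ω ((f0⁻¹ * f1 : F) : G) ((f1⁻¹ * f2 : F) : G) ((f2⁻¹ * f3 : F) : G) := by push_cast; rfl
    rw [hc, h]
    simp only [hTFdef, ofMul_mul, ofMul_inv]
    abel
  set W : G → G → G → Additive kˣ :=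
    fun a b c => TF (P a) (P b) (P c) - hOm ω σ a b c with hW
  have key1 : ∀ a b c d : G, W b c d - W a c d + W a b d - W a b c = Om ω a b c d := by
    intro a b c d
    have split : W b c d - W a c d + W a b d - W a b c
        = (TF (P b) (P c) (P d) - TF (P a) (P c) (P d) + TF (P a) (P b) (P d)
            - TF (P a) (P b) (P c))
          - (hOm ω σ b c d - hOm ω σ a c d + hOm ω σ a b d - hOm ω σ a b c) := by
      simp only [hW]; abel
    rw [split, prism hω σ a b c d]
    have : Om ω (σ a) (σ b) (σ c) (σ d)
        = Om ω ((P a : G)) ((P b : G)) ((P c : G)) ((P d : G)) := rfl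
    rw [← hTF (P a) (P b) (P c) (P d), ← this]
    abel
  have hWF : ∀ (f : F) (a b c : G), W ((f : G) * a) ((f : G) * b) ((f : G) * c) = W a b c := by
    intro f a b c
    have hTFpart : TF (P ((f : G) * a)) (P ((f : G) * b)) (P ((f : G) * c))
        = TF (P a) (P b) (P c) := by
      simp only [hPf, hTFdef]
      congr 2 <;> group
    have hOmpart : hOm ω σ ((f : G) * a) ((f : G) * b) ((f : G) * c) = hOm ω σ a b c := by
      simp only [hOm, hσf, Om_inv]
    simp only [hW, hTFpart, hOmpart]
  -- averaged 2-cochain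
  set T : G → G → G → Additive kˣ :=
    fun a b c => ∑ γ : Γ, W ((γ : G) * a) ((γ : G) * b) ((γ : G) * c) with hT
  have hQbij : ∀ x : G, Function.Bijective (fun γ : Γ => Q ((γ : G) * x)) := by
    intro x
    rw [Finite.injective_iff_bijective.symm]
    intro γ γ' hqq
    have hqq' : Q ((γ : G) * x) = Q ((γ' : G) * x) := hqq
    have d1 : ((P ((γ : G) * x) : G)) * (Q ((γ : G) * x) : G) = (γ : G) * x := hPQ _
    have d2 : ((P ((γ' : G) * x) : G)) * (Q ((γ' : G) * x) : G) = (γ' : G) * x := hPQ _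
    rw [hqq'] at d1
    have hγγ' : (γ : G) * (γ' : G)⁻¹
        = (P ((γ : G) * x) : G) * (P ((γ' : G) * x) : G)⁻¹ := by
      have := congrArg₂ (fun u v : G => u * v⁻¹) d1 d2
      simpa [mul_inv_rev, mul_assoc, inv_mul_cancel_left, mul_inv_cancel_left] using this.symm
    have hmemF : (γ : G) * (γ' : G)⁻¹ ∈ F := by
      rw [hγγ']; exact mul_mem (P _).2 (inv_mem (P _).2)
    have hmemΓ : (γ : G) * (γ' : G)⁻¹ ∈ Γ := mul_mem γ.2 (inv_mem γ'.2)
    have := htriv _ hmemF hmemΓ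
    have : (γ : G) = (γ' : G) := by
      rw [mul_inv_eq_one] at this; exact this
    exact Subtype.ext this
  have hTinv : ∀ (x a b c : G), T (x * a) (x * b) (x * c) = T a b c := by
    intro x a b c
    have step : ∀ γ : Γ, W ((γ : G) * (x * a)) ((γ : G) * (x * b)) ((γ : G) * (x * c))
        = W ((Q ((γ : G) * x) : G) * a) ((Q ((γ : G) * x) : G) * b) ((Q ((γ : G) * x) : G) * c) := by
      intro γ
      have hdec : ∀ u : G, (γ : G) * (x * u)
          = (P ((γ : G) * x) : G) * ((Q ((γ : G) * x) : G) * u) := by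
        intro u
        simp only [← mul_assoc, hPQ]
      simp only [hdec]
      exact hWF _ _ _ _
    calc T (x * a) (x * b) (x * c)
        = ∑ γ : Γ, W ((Q ((γ : G) * x) : G) * a) ((Q ((γ : G) * x) : G) * b)
            ((Q ((γ : G) * x) : G) * c) := by
          rw [hT]; exact Finset.sum_congr rfl fun γ _ => step γ
      _ = T a b c := by
          rw [hT]
          exact Fintype.sum_bijective _ (hQbij x)
            (fun γ => W ((Q ((γ : G) * x) : G) * a) ((Q ((γ : G) * x) : G) * b)
              ((Q ((γ : G) * x) : G) * c))
            (fun γ => W ((γ : G) * a) ((γ : G) * b) ((γ : G) * c)) (fun γ => rfl)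
  have key2 : ∀ a b c d : G,
      T b c d - T a c d + T a b d - T a b c = (Nat.card Γ) • Om ω a b c d := by
    intro a b c d
    have : T b c d - T a c d + T a b d - T a b c
        = ∑ γ : Γ, (W ((γ : G) * b) ((γ : G) * c) ((γ : G) * d)
            - W ((γ : G) * a) ((γ : G) * c) ((γ : G) * d)
            + W ((γ : G) * a) ((γ : G) * b) ((γ : G) * d)
            - W ((γ : G) * a) ((γ : G) * b) ((γ : G) * c)) := by
      simp only [hT, ← Finset.sum_sub_distrib, ← Finset.sum_add_distrib]
    rw [this]
    have : ∀ γ : Γ, (W ((γ : G) * b) ((γ : G) * c) ((γ : G) * d)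
            - W ((γ : G) * a) ((γ : G) * c) ((γ : G) * d)
            + W ((γ : G) * a) ((γ : G) * b) ((γ : G) * d)
            - W ((γ : G) * a) ((γ : G) * b) ((γ : G) * c)) = Om ω a b c d := by
      intro γ
      rw [key1 ((γ : G) * a) ((γ : G) * b) ((γ : G) * c) ((γ : G) * d), Om_inv]
    rw [Finset.sum_congr rfl (fun γ _ => this γ), Finset.sum_const, Finset.card_univ,
      Nat.card_eq_fintype_card]
  -- back to inhomogeneous
  refine ⟨fun x y => Additive.toMul (T 1 x (x * y)), fun x y z => ?_⟩
  have h := key2 1 x (x * y) (x * y * z)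
  have hx1 : T x (x * y) (x * y * z) = T 1 y (y * z) := by
    have := hTinv x 1 y (y * z)
    simpa [mul_assoc] using this
  rw [hx1] at h
  have hOm1 : Om ω 1 x (x * y) (x * y * z) = Additive.ofMul (ω x y z) := by
    simp [Om, mul_assoc]
  rw [hOm1] at h
  have hmul := congrArg Additive.toMul h
  simp only [toMul_add, toMul_sub, toMul_nsmul, toMul_ofMul] at hmul
  rw [div_eq_mul_inv, div_eq_mul_inv] at hmul
  show ω x y z ^ Nat.card Γ
      = Additive.toMul (T 1 y (y * z)) * Additive.toMul (T 1 x (x * (y * z)))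
        * (Additive.toMul (T 1 (x * y) (x * y * z)))⁻¹ * (Additive.toMul (T 1 x (x * y)))⁻¹
  rw [show x * (y * z) = x * y * z from (mul_assoc x y z).symm, ← hmul]
  congr 1
  exact mul_right_comm _ _ _

private lemma cob_comb {ω1 ω2 : G → G → G → kˣ} (h1 : IsCoboundary3 ω1)
    (h2 : IsCoboundary3 ω2) (A B : ℤ) :
    IsCoboundary3 (fun x y z => ω1 x y z ^ A * ω2 x y z ^ B) := by
  obtain ⟨t1, ht1⟩ := h1
  obtain ⟨t2, ht2⟩ := h2
  refine ⟨fun x y => t1 x y ^ A * t2 x y ^ B, fun x y z => ?_⟩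
  show ω1 x y z ^ A * ω2 x y z ^ B = _
  rw [ht1 x y z, ht2 x y z]
  simp only [mul_zpow, inv_zpow]
  apply Additive.ofMul.injective
  simp only [ofMul_mul, ofMul_inv]
  abel

end Helpers

/-- If `G` is a finite group, `F` and `Γ` are subgroups with `|G| = |F|·|Γ|` and
`gcd(|F|,|Γ|) = 1`, and `ω` is a 3-cocycle on `G` with values in `kˣ` whose restrictions
to `F` and to `Γ` are coboundaries, then `ω` is a coboundary on `G`. -/
theorem statement0 {k : Type*} [Field k] [IsAlgClosed k] [CharZero k]
    {G : Type*} [Group G] [Finite G] (F Γ : Subgroup G)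
    (hcard : Nat.card G = Nat.card F * Nat.card Γ)
    (hcop : Nat.Coprime (Nat.card F) (Nat.card Γ))
    (ω : G → G → G → kˣ) (hω : IsCocycle3 ω)
    (hF : IsCoboundary3 (fun x y z : F => ω x y z))
    (hΓ : IsCoboundary3 (fun x y z : Γ => ω x y z)) :
    IsCoboundary3 ω := by
  have htriv : ∀ g : G, g ∈ F → g ∈ Γ → g = 1 := by
    intro g hgF hgΓ
    have hle : Nat.card (F ⊓ Γ : Subgroup G) ∣ Nat.card F :=
      Subgroup.card_dvd_of_le inf_le_left
    have hle2 : Nat.card (F ⊓ Γ : Subgroup G) ∣ Nat.card Γ :=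
      Subgroup.card_dvd_of_le inf_le_right
    have h1 : Nat.card (F ⊓ Γ : Subgroup G) = 1 :=
      Nat.eq_one_of_dvd_coprimes hcop hle hle2
    have hbot : (F ⊓ Γ : Subgroup G) = ⊥ := Subgroup.eq_bot_of_card_eq _ h1
    have : g ∈ (F ⊓ Γ : Subgroup G) := ⟨hgF, hgΓ⟩
    rw [hbot] at this
    exact this
  have hbFΓ : Function.Bijective (fun fγ : F × Γ => (fγ.1 : G) * (fγ.2 : G)) := by
    have hinj : Function.Injective (fun fγ : F × Γ => (fγ.1 : G) * (fγ.2 : G)) := by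
      rintro ⟨f, γ⟩ ⟨f', γ'⟩ hfγ
      have h : (f : G) * γ = (f' : G) * γ' := hfγ
      have h2 : ((f' : G))⁻¹ * f = (γ' : G) * (γ : G)⁻¹ := by
        have := congrArg (fun u : G => ((f' : G))⁻¹ * u * ((γ : G))⁻¹) h
        simpa [mul_assoc] using this
    -- (f'⁻¹ f) ∈ F and = γ' γ⁻¹ ∈ Γ
      have hmF : ((f' : G))⁻¹ * f ∈ F := mul_mem (inv_mem f'.2) f.2
      have hmΓ : ((f' : G))⁻¹ * f ∈ Γ := by rw [h2]; exact mul_mem γ'.2 (inv_mem γ.2)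
      have h3 := htriv _ hmF hmΓ
      have hf : (f : G) = f' := by
        rw [inv_mul_eq_one] at h3; exact h3.symm
      have hγ : (γ : G) = γ' := by
        rw [h3] at h2
        have := h2.symm
        rw [mul_inv_eq_one] at this
        exact this.symm
      exact Prod.ext (Subtype.ext hf) (Subtype.ext hγ)
    rw [Nat.bijective_iff_injective_and_card]
    exact ⟨hinj, by rw [Nat.card_prod, ← hcard]⟩
  have hbΓF : Function.Bijective (fun γf : Γ × F => (γf.1 : G) * (γf.2 : G)) := by
    have hinj : Function.Injective (fun γf : Γ × F => (γf.1 : G) * (γf.2 : G)) := by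
      rintro ⟨γ, f⟩ ⟨γ', f'⟩ hfγ
      have h : (γ : G) * f = (γ' : G) * f' := hfγ
      have h2 : ((γ' : G))⁻¹ * γ = (f' : G) * (f : G)⁻¹ := by
        have := congrArg (fun u : G => ((γ' : G))⁻¹ * u * ((f : G))⁻¹) h
        simpa [mul_assoc] using this
      have hmΓ : ((γ' : G))⁻¹ * γ ∈ Γ := mul_mem (inv_mem γ'.2) γ.2
      have hmF : ((γ' : G))⁻¹ * γ ∈ F := by rw [h2]; exact mul_mem f'.2 (inv_mem f.2)
      have h3 := htriv _ hmF hmΓ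
      have hγ : (γ : G) = γ' := by
        rw [inv_mul_eq_one] at h3; exact h3.symm
      have hf : (f : G) = f' := by
        rw [h3] at h2
        have := h2.symm
        rw [mul_inv_eq_one] at this
        exact this.symm
      exact Prod.ext (Subtype.ext hγ) (Subtype.ext hf)
    rw [Nat.bijective_iff_injective_and_card]
    exact ⟨hinj, by rw [Nat.card_prod, ← Nat.mul_comm, ← hcard]⟩
  have cbΓ : IsCoboundary3 (fun x y z : G => ω x y z ^ (Nat.card Γ)) :=
    transfer_aux F Γ hbFΓ ω hω hF
  have cbF : IsCoboundary3 (fun x y z : G => ω x y z ^ (Nat.card F)) :=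
    transfer_aux Γ F hbΓF ω hω hΓ
  -- Bezout
  set a := Nat.card F with ha
  set b := Nat.card Γ with hb
  have hbez : (a : ℤ) * Nat.gcdA a b + (b : ℤ) * Nat.gcdB a b = 1 := by
    have := Nat.gcd_eq_gcd_ab a b
    rw [hcop] at this
    exact_mod_cast this.symm
  have hcomb := cob_comb cbF cbΓ (Nat.gcdA a b) (Nat.gcdB a b)
  obtain ⟨t, ht⟩ := hcomb
  refine ⟨t, fun x y z => ?_⟩
  rw [← ht x y z]
  show ω x y z = (ω x y z ^ a) ^ Nat.gcdA a b * (ω x y z ^ b) ^ Nat.gcdB a b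
  rw [← zpow_natCast (ω x y z) a, ← zpow_natCast (ω x y z) b, ← zpow_mul, ← zpow_mul,
    ← zpow_add, hbez, zpow_one]
end

section
/- Let N ≥ 1. For every N-th root of unity θ ∈ k, the map ω_θ(n,m,ℓ) = θ^{ℓ̄·⌊(n̄+m̄)/N⌋} is a 3-cocycle on the cyclic group Z/N with values in kˣ; moreover ω_θ·ω_{θ'} = ω_{θ·θ'} pointwise, ω_θ and ω_{θ'} are cohomologous if and only if θ = θ', and every 3-cocycle on Z/N with values in kˣ is cohomologous to ω_θ for some N-th root of unity θ. Hence θ ↦ [ω_θ] is a group isomorphism from the group of N-th roots of unity in k onto H³(Z/N, kˣ). -/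
/-- A 3-cocycle on an additive group `A` with values in `kˣ` (trivial action). -/
def IsAddCocycle3 {k : Type*} [Field k] {A : Type*} [AddGroup A] (ω : A → A → A → kˣ) : Prop :=
  ∀ x y z w : A, ω y z w * ω x (y + z) w * ω x y z = ω (x + y) z w * ω x y (z + w)

/-- A 3-coboundary on an additive group `A` with values in `kˣ`;
equivalently, the class in `H³(A, kˣ)` is trivial. -/
def IsAddCoboundary3 {k : Type*} [Field k] {A : Type*} [AddGroup A] (ω : A → A → A → kˣ) : Prop :=
  ∃ t : A → A → kˣ, ∀ x y z : A,
    ω x y z = t y z * t x (y + z) * (t (x + y) z)⁻¹ * (t x y)⁻¹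

/-- Two 3-cocycles are cohomologous if their pointwise quotient is a coboundary. -/
def AddCohomologous3 {k : Type*} [Field k] {A : Type*} [AddGroup A]
    (ω ω' : A → A → A → kˣ) : Prop :=
  IsAddCoboundary3 (fun x y z => ω x y z * (ω' x y z)⁻¹)

/-- The standard 3-cocycle `ω_θ(n,m,ℓ) = θ^(ℓ̄·⌊(n̄+m̄)/N⌋)` on `ZMod N`
associated to an `N`-th root of unity `θ`. -/
def omegaStd {k : Type*} [Field k] (N : ℕ) (θ : kˣ) : ZMod N → ZMod N → ZMod N → kˣ :=
  fun n m ℓ => θ ^ (ℓ.val * ((n.val + m.val) / N))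

/-!
The invariant of a 3-cocycle `ω` on `ZMod N` is the slice product `∏ j, ω 1 j 1`. It is
multiplicative in `ω`, trivial on coboundaries (the product telescopes), and equals `θ` on `ω_θ`
because the carries `⌊(1 + j̄)/N⌋` sum to `1̄`; this gives injectivity of `θ ↦ [ω_θ]`.

For surjectivity, the cocycle identity makes `c ↦ ∏ j, ω 1 j c` a character of `ZMod N`, hence
`c ↦ θ ^ c̄` with `θ` the invariant of `ω`. The partial products `T b c = ∏ i < b̄, ω 1 i c`
define a 2-cochain `t a b = T 1 b / T a b` such that `η = ω / (ω_θ · δt)` is trivial on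
`{1} × ZMod N × ZMod N`. The cocycle identity at `(1, x, y, z)` then gives
`η (x + 1) y z = η x y z`, and a cocycle that does not depend on its first variable is the
coboundary of `(a, b) ↦ η 0 0 b`.
-/

open Finset

section General

variable {k : Type*} [Field k] {A : Type*}

def sliceProd [Fintype A] (ω : A → A → A → kˣ) (g c : A) : kˣ := ∏ j, ω g j c

theorem sliceProd_mul [Fintype A] (ω η : A → A → A → kˣ) (g c : A) :
    sliceProd (ω * η) g c = sliceProd ω g c * sliceProd η g c :=
  prod_mul_distrib

theorem sliceProd_inv [Fintype A] (ω : A → A → A → kˣ) (g c : A) :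
    sliceProd ω⁻¹ g c = (sliceProd ω g c)⁻¹ :=
  prod_inv_distrib _

variable [AddCommGroup A]

def coboundary3 (t : A → A → kˣ) : A → A → A → kˣ :=
  fun x y z => t y z * t x (y + z) * (t (x + y) z)⁻¹ * (t x y)⁻¹

theorem isAddCoboundary3_iff {ω : A → A → A → kˣ} :
    IsAddCoboundary3 ω ↔ ∃ t, ω = coboundary3 t := by
  simp only [IsAddCoboundary3, funext_iff, coboundary3]

theorem addCohomologous3_iff {ω ω' : A → A → A → kˣ} :
    AddCohomologous3 ω ω' ↔ ∃ t, ω * ω'⁻¹ = coboundary3 t :=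
  isAddCoboundary3_iff

theorem coboundary3_mul (s t : A → A → kˣ) :
    coboundary3 (s * t) = coboundary3 s * coboundary3 t := by
  funext x y z
  simp only [coboundary3, Pi.mul_apply, mul_inv]
  ac_rfl

theorem isAddCocycle3_coboundary3 (t : A → A → kˣ) : IsAddCocycle3 (coboundary3 t) := by
  intro x y z w
  apply Additive.ofMul.injective
  simp only [coboundary3, add_assoc, ofMul_mul, ofMul_inv]
  abel

theorem IsAddCocycle3.mul {ω η : A → A → A → kˣ} (hω : IsAddCocycle3 ω) (hη : IsAddCocycle3 η) :
    IsAddCocycle3 (ω * η) := by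
  intro x y z w
  have := congr($(hω x y z w) * $(hη x y z w))
  simp only [Pi.mul_apply]
  convert this using 1 <;> ac_rfl

theorem IsAddCocycle3.inv {ω : A → A → A → kˣ} (hω : IsAddCocycle3 ω) :
    IsAddCocycle3 ω⁻¹ := by
  intro x y z w
  simp only [Pi.inv_apply, ← mul_inv, hω x y z w]

theorem IsAddCocycle3.apply_zero_left {ω : A → A → A → kˣ} (hω : IsAddCocycle3 ω) (y z : A) :
    ω 0 y z * ω 0 0 y = ω 0 0 (y + z) := by
  have h := hω 0 0 y z
  simp only [zero_add, add_zero, mul_assoc] at h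
  exact mul_left_cancel h

theorem IsAddCocycle3.isAddCoboundary3_of_apply_eq_apply_zero_left {ω : A → A → A → kˣ}
    (hω : IsAddCocycle3 ω) (h : ∀ x y z, ω x y z = ω 0 y z) : IsAddCoboundary3 ω := by
  refine ⟨fun _ b => ω 0 0 b, fun x y z => ?_⟩
  beta_reduce
  rw [h, ← hω.apply_zero_left y z]
  apply Additive.ofMul.injective
  simp only [ofMul_mul, ofMul_inv]
  abel

variable [Fintype A]

theorem sliceProd_coboundary3 (t : A → A → kˣ) (g c : A) : sliceProd (coboundary3 t) g c = 1 := by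
  have hr : ∏ j, t g (j + c) = ∏ j, t g j :=
    Fintype.prod_equiv (Equiv.addRight c) _ _ fun _ => rfl
  have hl : ∏ j, t (g + j) c = ∏ j, t j c := Fintype.prod_equiv (Equiv.addLeft g) _ _ fun _ => rfl
  simp only [sliceProd, coboundary3, prod_mul_distrib, prod_inv_distrib, hr, hl]
  rw [mul_inv_cancel_comm, mul_inv_cancel]

theorem IsAddCocycle3.sliceProd_add {ω : A → A → A → kˣ} (hω : IsAddCocycle3 ω) (g c d : A) :
    sliceProd ω g (c + d) = sliceProd ω g c * sliceProd ω g d := by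
  have hr : ∏ j, ω g (j + c) d = sliceProd ω g d :=
    Fintype.prod_equiv (Equiv.addRight c) _ _ fun _ => rfl
  have hl : ∏ j, ω (g + j) c d = ∏ j, ω j c d :=
    Fintype.prod_equiv (Equiv.addLeft g) _ _ fun _ => rfl
  have h := prod_congr rfl fun j (_ : j ∈ univ) => hω g j c d
  simp only [prod_mul_distrib, hr, hl, mul_assoc] at h
  rw [mul_comm]
  exact (mul_left_cancel h).symm

def IsAddCocycle3.sliceChar {ω : A → A → A → kˣ} (hω : IsAddCocycle3 ω) (g : A) : AddChar A kˣ where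
  toFun := sliceProd ω g
  map_zero_eq_one' := by
    have h := hω.sliceProd_add g 0 0
    rw [add_zero] at h
    exact left_eq_mul.mp h
  map_add_eq_mul' := hω.sliceProd_add g

end General

namespace ZMod

variable {N : ℕ}

def carry (a b : ZMod N) : ℕ := (a.val + b.val) / N

variable [NeZero N]

theorem val_add_val_eq (a b : ZMod N) : a.val + b.val = (a + b).val + N * carry a b := by
  rw [val_add, carry]
  exact (Nat.mod_add_div _ _).symm

theorem carry_add_carry (x y z : ZMod N) :
    carry y z + carry x (y + z) = carry x y + carry (x + y) z := by
  have := val_add_val_eq y z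
  have := val_add_val_eq x (y + z)
  have := val_add_val_eq x y
  have := val_add_val_eq (x + y) z
  rw [← add_assoc] at *
  apply Nat.eq_of_mul_eq_mul_left (NeZero.pos N)
  linarith

theorem sum_carry (a : ZMod N) : ∑ j, carry a j = a.val := by
  have h : ∑ j, ((a + j).val + N * carry a j) = ∑ j : ZMod N, (a.val + j.val) :=
    Finset.sum_congr rfl fun j _ => (val_add_val_eq a j).symm
  have hshift : ∑ j, (a + j).val = ∑ j : ZMod N, j.val :=
    Fintype.sum_equiv (Equiv.addLeft a) _ _ fun _ => rfl
  rw [Finset.sum_add_distrib, Finset.sum_add_distrib, hshift, ← Finset.mul_sum,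
    Finset.sum_const, Finset.card_univ, card, smul_eq_mul] at h
  exact Nat.eq_of_mul_eq_mul_left (NeZero.pos N) (by linarith)

theorem prod_univ_eq_prod_range {M : Type*} [CommMonoid M] (f : ZMod N → M) :
    ∏ j, f j = ∏ i ∈ Finset.range N, f i :=
  Finset.prod_nbij' val Nat.cast (fun a _ => Finset.mem_range.mpr (val_lt a))
    (fun _ _ => Finset.mem_univ _) (fun a _ => natCast_zmod_val a)
    (fun _ hi => val_cast_of_lt (Finset.mem_range.mp hi)) (fun a _ => by rw [natCast_zmod_val])

end ZMod

section CyclicGroup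

variable {k : Type*} [Field k] {N : ℕ}

theorem omegaStd_apply (θ : kˣ) (n m ℓ : ZMod N) :
    omegaStd N θ n m ℓ = θ ^ (ℓ.val * ZMod.carry n m) :=
  rfl

variable [NeZero N]

theorem isAddCocycle3_omegaStd {θ : kˣ} (hθ : θ ^ N = 1) : IsAddCocycle3 (omegaStd N θ) := by
  intro x y z w
  have hcarry := ZMod.carry_add_carry x y z
  have hval := ZMod.val_add_val_eq z w
  have hexp : w.val * ZMod.carry y z + w.val * ZMod.carry x (y + z) + z.val * ZMod.carry x y
      = w.val * ZMod.carry (x + y) z + (z + w).val * ZMod.carry x y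
        + N * (ZMod.carry x y * ZMod.carry z w) := by
    zify at hcarry hval ⊢
    linear_combination (w.val : ℤ) * hcarry + (ZMod.carry x y : ℤ) * hval
  simp only [omegaStd_apply, ← pow_add]
  rw [hexp, pow_add, pow_mul, hθ, one_pow, mul_one]

theorem sliceProd_omegaStd_one_one {θ : kˣ} (hθ : θ ^ N = 1) :
    sliceProd (omegaStd N θ) 1 1 = θ := by
  simp only [sliceProd, omegaStd_apply, prod_pow_eq_pow_sum, ← mul_sum,
    ZMod.sum_carry]
  rcases eq_or_ne N 1 with rfl | hN
  · rw [pow_one] at hθ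
    rw [hθ, one_pow]
  · rw [ZMod.val_one'' hN, mul_one, pow_one]

theorem addCohomologous3_omegaStd_iff {θ θ' : kˣ} (hθ : θ ^ N = 1) (hθ' : θ' ^ N = 1) :
    AddCohomologous3 (omegaStd N θ) (omegaStd N θ') ↔ θ = θ' := by
  constructor
  · intro h
    obtain ⟨t, ht⟩ := addCohomologous3_iff.mp h
    have := congr(sliceProd $ht 1 1)
    rw [sliceProd_mul, sliceProd_inv, sliceProd_omegaStd_one_one hθ,
      sliceProd_omegaStd_one_one hθ', sliceProd_coboundary3] at this
    exact mul_inv_eq_one.mp this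
  · rintro rfl
    exact addCohomologous3_iff.mpr ⟨1, by funext x y z; simp [coboundary3]⟩

theorem IsAddCocycle3.sliceProd_eq_pow_val {ω : ZMod N → ZMod N → ZMod N → kˣ}
    (hω : IsAddCocycle3 ω) (c : ZMod N) : sliceProd ω 1 c = sliceProd ω 1 1 ^ c.val := by
  have h := (hω.sliceChar 1).map_nsmul_eq_pow c.val 1
  rwa [nsmul_one, ZMod.natCast_zmod_val] at h

theorem IsAddCocycle3.sliceProd_one_one_pow {ω : ZMod N → ZMod N → ZMod N → kˣ}
    (hω : IsAddCocycle3 ω) : sliceProd ω 1 1 ^ N = 1 := by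
  have h := (hω.sliceChar 1).map_nsmul_eq_pow N 1
  rw [nsmul_one, ZMod.natCast_self, AddChar.map_zero_eq_one] at h
  exact h.symm

theorem IsAddCocycle3.apply_eq_apply_zero_left_of_apply_one_left
    {ω : ZMod N → ZMod N → ZMod N → kˣ} (hω : IsAddCocycle3 ω) (h1 : ∀ y z, ω 1 y z = 1)
    (x y z : ZMod N) : ω x y z = ω 0 y z := by
  have step : ∀ x, ω (x + 1) y z = ω x y z := fun x => by
    have h := hω 1 x y z
    rw [h1, h1, h1, mul_one, mul_one, mul_one, add_comm] at h
    exact h.symm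
  rw [← ZMod.natCast_zmod_val x]
  induction x.val with
  | zero => rw [Nat.cast_zero]
  | succ n ih => rw [Nat.cast_succ, step, ih]

def partialSliceProd (ω : ZMod N → ZMod N → ZMod N → kˣ) (b c : ZMod N) : kˣ :=
  ∏ i ∈ range b.val, ω 1 i c

theorem IsAddCocycle3.apply_one_left_eq {ω : ZMod N → ZMod N → ZMod N → kˣ}
    (hω : IsAddCocycle3 ω) (hN : 1 < N) (b c : ZMod N) :
    ω 1 b c = omegaStd N (sliceProd ω 1 1) 1 b c * partialSliceProd ω (1 + b) c
      * (partialSliceProd ω b c)⁻¹ := by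
  have hval1 : (1 : ZMod N).val = 1 := ZMod.val_one'' hN.ne'
  have hsucc : partialSliceProd ω b c * ω 1 b c = ∏ i ∈ range (b.val + 1), ω 1 i c := by
    rw [partialSliceProd, prod_range_succ, ZMod.natCast_zmod_val]
  rw [omegaStd_apply, ZMod.carry, hval1, add_comm 1 b.val]
  obtain hb | hb : b.val + 1 < N ∨ b.val + 1 = N := by have := ZMod.val_lt b; omega
  · have hT : partialSliceProd ω (1 + b) c = partialSliceProd ω b c * ω 1 b c := by
      rw [hsucc, partialSliceProd, ZMod.val_add, hval1, add_comm 1 b.val, Nat.mod_eq_of_lt hb]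
    rw [Nat.div_eq_of_lt hb, mul_zero, pow_zero, one_mul, hT, mul_inv_cancel_comm]
  · have hT : partialSliceProd ω (1 + b) c = 1 := by
      rw [partialSliceProd, ZMod.val_add, hval1, add_comm 1 b.val, hb, Nat.mod_self,
        prod_range_zero]
    rw [hb] at hsucc
    rw [hb, Nat.div_self (NeZero.pos N), mul_one, ← hω.sliceProd_eq_pow_val, sliceProd,
      ZMod.prod_univ_eq_prod_range, ← hsucc, hT, mul_one, mul_inv_cancel_comm]

theorem IsAddCocycle3.addCohomologous3_omegaStd_sliceProd {ω : ZMod N → ZMod N → ZMod N → kˣ}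
    (hω : IsAddCocycle3 ω) (hN : 1 < N) : AddCohomologous3 ω (omegaStd N (sliceProd ω 1 1)) := by
  set θ := sliceProd ω 1 1
  set T := partialSliceProd ω
  set t : ZMod N → ZMod N → kˣ := fun a b => T 1 b * (T a b)⁻¹
  have ht : ∀ y z, coboundary3 t 1 y z = T (1 + y) z * (T y z)⁻¹ := fun y z => by
    apply Additive.ofMul.injective
    simp only [coboundary3, t, ofMul_mul, ofMul_inv]
    abel
  set η := ω * (omegaStd N θ * coboundary3 t)⁻¹
  have hη : IsAddCocycle3 η :=
    hω.mul ((isAddCocycle3_omegaStd hω.sliceProd_one_one_pow).mul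
      (isAddCocycle3_coboundary3 t)).inv
  have hη1 : ∀ y z, η 1 y z = 1 := fun y z => by
    simp only [η, Pi.mul_apply, Pi.inv_apply, ht]
    rw [mul_inv_eq_one, hω.apply_one_left_eq hN y z, mul_assoc]
  obtain ⟨s, hs⟩ := isAddCoboundary3_iff.mp <| hη.isAddCoboundary3_of_apply_eq_apply_zero_left
    (hη.apply_eq_apply_zero_left_of_apply_one_left hη1)
  refine addCohomologous3_iff.mpr ⟨t * s, ?_⟩
  rw [coboundary3_mul, ← hs]
  apply Additive.ofMul.injective
  simp only [η, ofMul_mul, ofMul_inv]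
  abel

theorem IsAddCocycle3.exists_addCohomologous3_omegaStd {ω : ZMod N → ZMod N → ZMod N → kˣ}
    (hω : IsAddCocycle3 ω) : ∃ θ : kˣ, θ ^ N = 1 ∧ AddCohomologous3 ω (omegaStd N θ) := by
  rcases (NeZero.one_le : 1 ≤ N).eq_or_lt with rfl | hN
  · refine ⟨1, one_pow 1, ?_⟩
    have hquot := hω.mul (isAddCocycle3_omegaStd (one_pow 1)).inv
    exact hquot.isAddCoboundary3_of_apply_eq_apply_zero_left fun x _ _ => by
      rw [Subsingleton.elim x 0]
  · exact ⟨_, hω.sliceProd_one_one_pow, hω.addCohomologous3_omegaStd_sliceProd hN⟩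

end CyclicGroup

theorem statement1_general {k : Type*} [Field k]
    (N : ℕ) (hN : 1 ≤ N) :
    (∀ θ : kˣ, θ ^ N = 1 → IsAddCocycle3 (omegaStd N θ)) ∧
    (∀ θ θ' : kˣ, ∀ n m ℓ : ZMod N,
      omegaStd N θ n m ℓ * omegaStd N θ' n m ℓ = omegaStd N (θ * θ') n m ℓ) ∧
    (∀ θ θ' : kˣ, θ ^ N = 1 → θ' ^ N = 1 →
      (AddCohomologous3 (omegaStd N θ) (omegaStd N θ') ↔ θ = θ')) ∧
    (∀ ω : ZMod N → ZMod N → ZMod N → kˣ, IsAddCocycle3 ω →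
      ∃ θ : kˣ, θ ^ N = 1 ∧ AddCohomologous3 ω (omegaStd N θ)) := by
  have : NeZero N := ⟨by omega⟩
  exact ⟨fun _ hθ => isAddCocycle3_omegaStd hθ, fun θ θ' _ _ _ => (mul_pow θ θ' _).symm,
    fun _ _ hθ hθ' => addCohomologous3_omegaStd_iff hθ hθ',
    fun _ hω => hω.exists_addCohomologous3_omegaStd⟩

/-- For every `N`-th root of unity `θ`, `ω_θ` is a 3-cocycle on `Z/N`; moreover
`ω_θ · ω_{θ'} = ω_{θθ'}` pointwise; `ω_θ` and `ω_{θ'}` are cohomologous iff `θ = θ'`;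
and every 3-cocycle on `Z/N` with values in `kˣ` is cohomologous to some `ω_θ`.
Hence `θ ↦ [ω_θ]` is a group isomorphism from the `N`-th roots of unity onto `H³(Z/N, kˣ)`. -/
theorem statement1 {k : Type*} [Field k] [IsAlgClosed k] [CharZero k]
    (N : ℕ) (hN : 1 ≤ N) :
    (∀ θ : kˣ, θ ^ N = 1 → IsAddCocycle3 (omegaStd N θ)) ∧
    (∀ θ θ' : kˣ, ∀ n m ℓ : ZMod N,
      omegaStd N θ n m ℓ * omegaStd N θ' n m ℓ = omegaStd N (θ * θ') n m ℓ) ∧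
    (∀ θ θ' : kˣ, θ ^ N = 1 → θ' ^ N = 1 →
      (AddCohomologous3 (omegaStd N θ) (omegaStd N θ') ↔ θ = θ')) ∧
    (∀ ω : ZMod N → ZMod N → ZMod N → kˣ, IsAddCocycle3 ω →
      ∃ θ : kˣ, θ ^ N = 1 ∧ AddCohomologous3 ω (omegaStd N θ)) :=
  statement1_general N hN
end

section
/- Let N ≥ 1 be odd and not divisible by 3, and let ξ ∈ k be an N-th root of unity. Then the 3-cocycle ω̃_ξ on Z/N is a coboundary; that is, there exists t : (Z/N)² → kˣ with ω̃_ξ(n,m,ℓ) = t(m,ℓ)·t(n,m+ℓ)·t(n+m,ℓ)⁻¹·t(n,m)⁻¹ for all n,m,ℓ ∈ Z/N. -/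
/-- The map `ω̃_ξ(n,m,ℓ) = ξ^{m̄·(n̄·C(ℓ̄,2) + ℓ̄·C(n̄,2) + n̄·m̄·ℓ̄)}` on `ZMod N`,
where `C(a,2) = a(a−1)/2` and bars denote representatives in `{0,…,N−1}`. -/
def omegaTilde {k : Type*} [Field k] (N : ℕ) (ξ : kˣ) : ZMod N → ZMod N → ZMod N → kˣ :=
  fun n m ℓ => ξ ^ (m.val * (n.val * Nat.choose ℓ.val 2 + ℓ.val * Nat.choose n.val 2
    + n.val * m.val * ℓ.val))

lemma two_mul_choose_two_add (a : ℕ) : 2 * Nat.choose a 2 + a = a * a := by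
  induction a with
  | zero => rfl
  | succ b ih =>
    rw [Nat.choose_succ_succ, Nat.choose_one_right]
    ring_nf
    ring_nf at ih
    omega

/-- If `N ≥ 1` is odd and not divisible by `3`, and `ξ` is an `N`-th root of unity in `k`,
then the 3-cocycle `ω̃_ξ` on `Z/N` is a coboundary. -/
theorem statement4 {k : Type*} [Field k] [IsAlgClosed k] [CharZero k]
    (N : ℕ) (hN : 1 ≤ N) (hodd : Odd N) (h3 : ¬ (3 ∣ N)) (ξ : kˣ) (hξ : ξ ^ N = 1) :
    IsAddCoboundary3 (omegaTilde N ξ) := by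
  haveI : NeZero N := ⟨by omega⟩
  -- reduction of exponents mod N
  have hmod : ∀ a : ℕ, ξ ^ a = ξ ^ (a % N) := by
    intro a
    conv_lhs => rw [← Nat.div_add_mod a N]
    rw [pow_add, pow_mul, hξ, one_pow, one_mul]
  have hz : ∀ a b : ℕ, ((a : ZMod N) = (b : ZMod N)) → ξ ^ a = ξ ^ b := by
    intro a b h
    rw [ZMod.natCast_eq_natCast_iff] at h
    rw [hmod a, hmod b, h]
  -- the "ξ to the power of a ZMod N element" map
  set ζ : ZMod N → kˣ := fun x => ξ ^ x.val with hζ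
  have hval : ∀ x : ZMod N, ((x.val : ℕ) : ZMod N) = x := by
    intro x; simp [ZMod.natCast_val, ZMod.cast_id]
  have hζnat : ∀ a : ℕ, ξ ^ a = ζ ((a : ℕ) : ZMod N) := by
    intro a
    apply hz
    rw [hval]
  have hζadd : ∀ x y : ZMod N, ζ (x + y) = ζ x * ζ y := by
    intro x y
    rw [hζ]
    simp only
    rw [← pow_add]
    apply hz
    push_cast
    rw [hval, hval, hval]
  have hζzero : ζ 0 = 1 := by
    rw [hζ]; simp only [ZMod.val_zero, pow_zero]
  have hζneg : ∀ x : ZMod N, ζ (-x) = (ζ x)⁻¹ := by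
    intro x
    apply eq_inv_of_mul_eq_one_left
    rw [← hζadd, neg_add_cancel, hζzero]
  -- units
  have c2 : Nat.Coprime 2 N := by
    rw [Nat.Prime.coprime_iff_not_dvd Nat.prime_two]
    obtain ⟨j, hj⟩ := hodd
    omega
  have c3 : Nat.Coprime 3 N :=
    (Nat.Prime.coprime_iff_not_dvd (by norm_num)).mpr h3
  have c12 : Nat.Coprime 12 N := by
    have h4 : Nat.Coprime (2 * 2) N := Nat.Coprime.mul c2 c2
    have h12 : Nat.Coprime (2 * 2 * 3) N := Nat.Coprime.mul h4 c3
    simpa using h12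
  have h2u : IsUnit (2 : ZMod N) := by
    have := (ZMod.isUnit_iff_coprime 2 N).mpr c2
    simpa using this
  have h12u : IsUnit (12 : ZMod N) := by
    have := (ZMod.isUnit_iff_coprime 12 N).mpr c12
    simpa using this
  obtain ⟨u12, hu12⟩ := h12u
  set w : ZMod N := ((u12⁻¹ : (ZMod N)ˣ) : ZMod N) with hwdef
  have hw : (12 : ZMod N) * w = 1 := by
    rw [← hu12, hwdef]
    exact_mod_cast u12.mul_inv
  -- the coboundary
  set e : ZMod N → ZMod N → ZMod N :=
    fun x y => w * (4 * x * y ^ 3 + 3 * x ^ 2 * y ^ 2 - 6 * x * y ^ 2) with he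
  refine ⟨fun x y => ζ (e x y), ?_⟩
  intro n m ℓ
  -- choose relations in ZMod N
  have hC : ∀ x : ZMod N,
      2 * ((Nat.choose x.val 2 : ℕ) : ZMod N) + x = x ^ 2 := by
    intro x
    have := two_mul_choose_two_add x.val
    have hcast : (((2 * Nat.choose x.val 2 + x.val : ℕ)) : ZMod N)
        = ((x.val * x.val : ℕ) : ZMod N) := by rw [this]
    push_cast at hcast
    rw [hval] at hcast
    rw [hcast]
    ring
  have hCl := hC ℓ
  have hCn := hC n
  -- the key congruence of exponents
  have key : ((m.val * (n.val * Nat.choose ℓ.val 2 + ℓ.val * Nat.choose n.val 2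
      + n.val * m.val * ℓ.val) : ℕ) : ZMod N)
      = e m ℓ + e n (m + ℓ) + -(e (n + m) ℓ) + -(e n m) := by
    push_cast
    rw [hval, hval, hval]
    apply h2u.mul_left_cancel
    rw [he]
    simp only
    linear_combination (m * n) * hCl + (m * ℓ) * hCn
      + (-(n * m * ℓ * (n + 2 * m + ℓ - 2))) * hw
  show ξ ^ (m.val * (n.val * Nat.choose ℓ.val 2 + ℓ.val * Nat.choose n.val 2
      + n.val * m.val * ℓ.val)) = _
  rw [hζnat, key, hζadd, hζadd, hζadd, hζneg, hζneg]
end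

section
/- Let p be an odd prime and let ζ, λ ∈ k satisfy ζ^p = λ^p = 1. For s,t,u ∈ Z/p and x = (i,j), y = (i',j'), z ∈ Z/p × Z/p define σ_s(x,y) = ζ^{−s̄·j̄·ī' − C(s̄,2)·j̄·j̄'}, τ_x(s,t) = λ^{j̄·⌊(s̄+t̄)/p⌋}, and s ▷ (i,j) = (i + s·j, j). Then for all s,t,u ∈ Z/p and x,y,z ∈ Z/p × Z/p the following hold: (i) σ_s(y,z)·σ_s(x, y+z) = σ_s(x+y, z)·σ_s(x,y); (ii) σ_0(x,y) = σ_s(x,0) = σ_s(0,y) = 1; (iii) τ_x(s+t, u)·τ_{u ▷ x}(s,t) = τ_x(s, t+u)·τ_x(t,u); (iv) τ_0(s,t) = τ_x(s,0) = τ_x(0,t) = 1; (v) σ_{s+t}(x,y)·τ_{x+y}(s,t) = σ_s(t ▷ x, t ▷ y)·σ_t(x,y)·τ_x(s,t)·τ_y(s,t). (These are the normalized cocycle and compatibility conditions making the bicrossed product k^Γ #^τ_σ kF associated to the matched pair (F, Γ) = (Z/p × Z/p, Z/p) with trivial action ◁ a Hopf algebra.) -/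
private lemma key_zpow {k : Type*} [Field k] {p : ℕ} [NeZero p] (u : kˣ) (hu : u ^ p = 1)
    {a b : ℤ} (h : ((a : ZMod p) = (b : ZMod p))) : u ^ a = u ^ b := by
  rw [ZMod.intCast_eq_intCast_iff] at h
  obtain ⟨c, hc⟩ := h.dvd
  rw [show a = b + (p : ℤ) * (-c) by linarith, zpow_add, zpow_mul, zpow_natCast, hu, one_zpow,
    mul_one]

private lemma key_pow {k : Type*} [Field k] {p : ℕ} [NeZero p] (u : kˣ) (hu : u ^ p = 1)
    {m n : ℕ} (h : ((m : ZMod p) = (n : ZMod p))) : u ^ m = u ^ n := by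
  rw [← zpow_natCast, ← zpow_natCast u n]
  exact key_zpow u hu (by push_cast; exact_mod_cast h)

private lemma choose_two_add (a b : ℕ) :
    (a + b).choose 2 = a.choose 2 + b.choose 2 + a * b := by
  induction b with
  | zero => simp
  | succ n ih =>
    have h1 : (a + (n + 1)).choose 2 = (a + n).choose 2 + (a + n) := by
      rw [show a + (n + 1) = (a + n) + 1 from rfl, Nat.choose_succ_succ,
        show Nat.succ 1 = 2 from rfl, Nat.choose_one_right]
      omega
    have h2 : (n + 1).choose 2 = n.choose 2 + n := by
      rw [Nat.choose_succ_succ, show Nat.succ 1 = 2 from rfl, Nat.choose_one_right]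
      omega
    rw [h1, ih, h2, Nat.mul_succ]
    omega

private lemma dvd_choose_two_mul {p : ℕ} (hp : p.Prime) (h2 : 2 < p) (d : ℕ) :
    p ∣ (p * d).choose 2 := by
  induction d with
  | zero => simp
  | succ n ih =>
    rw [Nat.mul_succ, choose_two_add]
    exact dvd_add (dvd_add ih (hp.dvd_choose_self (by norm_num) h2)) (dvd_mul_left p (p * n))

private lemma choose_val_add {p : ℕ} [NeZero p] (hp : p.Prime) (h2 : 2 < p) (s t : ZMod p) :
    (((s + t).val.choose 2 : ℕ) : ZMod p)
      = ((s.val.choose 2 : ℕ) : ZMod p) + ((t.val.choose 2 : ℕ) : ZMod p)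
        + (s.val : ZMod p) * (t.val : ZMod p) := by
  set d := (s.val + t.val) / p with hd
  have hde : (s + t).val + p * d = s.val + t.val := by
    rw [ZMod.val_add, hd]; exact Nat.mod_add_div _ _
  have e : (s + t).val.choose 2 + (p * d).choose 2 + (s + t).val * (p * d)
      = s.val.choose 2 + t.val.choose 2 + s.val * t.val := by
    rw [← choose_two_add, hde, choose_two_add]
  obtain ⟨c, hc⟩ := dvd_choose_two_mul hp h2 d
  have h := congrArg (fun n : ℕ => (n : ZMod p)) e
  simp only [hc] at h
  push_cast at h
  simp only [ZMod.natCast_self, zero_mul, mul_zero, add_zero, zero_add] at h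
  linear_combination h
/-- The cocycle `σ_s((i,j),(i',j')) = ζ^{−s̄·j̄·ī' − C(s̄,2)·j̄·j̄'}` with values in `kˣ`,
where bars denote representatives in `{0,…,p−1}` and `C(a,2) = a(a−1)/2`. -/
def sigmaP {k : Type*} [Field k] (p : ℕ) (ζ : kˣ) :
    ZMod p → ZMod p × ZMod p → ZMod p × ZMod p → kˣ :=
  fun s x y =>
    ζ ^ (-((s.val * x.2.val * y.1.val + Nat.choose s.val 2 * (x.2.val * y.2.val) : ℕ) : ℤ))

/-- The dual cocycle `τ_{(i,j)}(s,t) = λ^{j̄·⌊(s̄+t̄)/p⌋}` with values in `kˣ`. -/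
def tauP {k : Type*} [Field k] (p : ℕ) (lam : kˣ) :
    ZMod p × ZMod p → ZMod p → ZMod p → kˣ :=
  fun x s t => lam ^ (x.2.val * ((s.val + t.val) / p))

/-- The action `s ▷ (i,j) = (i + s·j, j)` of `Z/p` on `Z/p × Z/p`. -/
def actP (p : ℕ) : ZMod p → ZMod p × ZMod p → ZMod p × ZMod p :=
  fun s x => (x.1 + s * x.2, x.2)

/-- For `p` an odd prime and `ζ, λ ∈ k` with `ζ^p = λ^p = 1`, the maps `σ`, `τ` satisfy
the normalized cocycle and compatibility conditions (i)–(v) making the bicrossed product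
`k^Γ #^τ_σ kF` associated to the matched pair `(Z/p × Z/p, Z/p)` (with trivial `◁`)
a Hopf algebra. -/
theorem statement5 {k : Type*} [Field k] [IsAlgClosed k] [CharZero k]
    (p : ℕ) (hp : p.Prime) (hodd : Odd p)
    (ζ lam : kˣ) (hζ : ζ ^ p = 1) (hlam : lam ^ p = 1) :
    -- (i) σ is a 2-cocycle in the first variable (trivial action ◁)
    (∀ (s : ZMod p) (x y z : ZMod p × ZMod p),
      sigmaP p ζ s y z * sigmaP p ζ s x (y + z)
        = sigmaP p ζ s (x + y) z * sigmaP p ζ s x y) ∧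
    -- (ii) σ is normalized
    (∀ (s : ZMod p) (x y : ZMod p × ZMod p),
      sigmaP p ζ 0 x y = 1 ∧ sigmaP p ζ s x 0 = 1 ∧ sigmaP p ζ s 0 y = 1) ∧
    -- (iii) τ is a 2-cocycle (dual cocycle condition)
    (∀ (s t u : ZMod p) (x : ZMod p × ZMod p),
      tauP p lam x (s + t) u * tauP p lam (actP p u x) s t
        = tauP p lam x s (t + u) * tauP p lam x t u) ∧
    -- (iv) τ is normalized
    (∀ (s t : ZMod p) (x : ZMod p × ZMod p),
      tauP p lam 0 s t = 1 ∧ tauP p lam x s 0 = 1 ∧ tauP p lam x 0 t = 1) ∧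
    -- (v) compatibility condition
    (∀ (s t : ZMod p) (x y : ZMod p × ZMod p),
      sigmaP p ζ (s + t) x y * tauP p lam (x + y) s t
        = sigmaP p ζ s (actP p t x) (actP p t y) * sigmaP p ζ t x y
          * tauP p lam x s t * tauP p lam y s t) := by
  haveI : NeZero p := ⟨hp.pos.ne'⟩
  have h2p : 2 < p := by
    rcases hodd with ⟨m, hm⟩
    have := hp.two_le
    omega
  have hq : ∀ a b c : ℕ, ((a + b) % p + c) / p + (a + b) / p = (a + b + c) / p := by
    intro a b c
    conv_rhs => rw [← Nat.div_add_mod (a + b) p]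
    rw [show p * ((a + b) / p) + (a + b) % p + c = (a + b) % p + c + p * ((a + b) / p) by ring,
      Nat.add_mul_div_left _ _ hp.pos]
  refine ⟨?_, ?_, ?_, ?_, ?_⟩
  · intro s x y z
    unfold sigmaP
    rw [← zpow_add, ← zpow_add]
    apply key_zpow ζ hζ
    push_cast
    simp only [Prod.fst_add, Prod.snd_add, ZMod.natCast_val, ZMod.cast_id]
    ring
  · intro s x y
    refine ⟨?_, ?_, ?_⟩ <;> simp [sigmaP, ZMod.val_zero]
  · intro s t u x
    simp only [tauP, actP]
    rw [← pow_add, ← pow_add, ← Nat.mul_add, ← Nat.mul_add]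
    congr 1
    rw [ZMod.val_add s t, ZMod.val_add t u, hq s.val t.val u.val,
      add_comm (s.val) ((t.val + u.val) % p), hq t.val u.val s.val]
    rw [show s.val + t.val + u.val = t.val + u.val + s.val from by omega]
  · intro s t x
    refine ⟨?_, ?_, ?_⟩
    · simp [tauP]
    · simp [tauP, ZMod.val_zero, Nat.div_eq_of_lt (ZMod.val_lt s)]
    · simp [tauP, ZMod.val_zero, Nat.div_eq_of_lt (ZMod.val_lt t)]
  · intro s t x y
    have h1 : sigmaP p ζ (s + t) x y
        = sigmaP p ζ s (actP p t x) (actP p t y) * sigmaP p ζ t x y := by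
      simp only [sigmaP, actP]
      rw [← zpow_add]
      apply key_zpow ζ hζ
      have hC := choose_val_add (p := p) hp h2p s t
      push_cast
      simp only [ZMod.natCast_val, ZMod.cast_id] at hC ⊢
      rw [hC]
      ring
    have h2 : tauP p lam (x + y) s t = tauP p lam x s t * tauP p lam y s t := by
      simp only [tauP, Prod.snd_add]
      rw [← pow_add, ← Nat.add_mul]
      apply key_pow lam hlam
      push_cast
      simp only [ZMod.natCast_val, ZMod.cast_id]
    rw [h1, h2]
    exact (mul_assoc _ _ _).symm
end

section
/- For every pair ζ, λ ∈ k of p-th roots of unity, the map ω_{ζ,λ} is a 3-cocycle on G with values in kˣ; that is, ω_{ζ,λ}(y,z,w)·ω_{ζ,λ}(x,y·z,w)·ω_{ζ,λ}(x,y,z) = ω_{ζ,λ}(x·y,z,w)·ω_{ζ,λ}(x,y,z·w) for all x,y,z,w ∈ G. -/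
/-- The semidirect product `G = (Z/p × Z/p) ⋊ Z/p` in which the generator `x` of the
acting group `Z/p` acts on `Z/p × Z/p` by `x·(i,j) = (i+j, j)`.  An element
`⟨i, j, n⟩` corresponds to `a^i b^j x^n`, where `a = ((1,0),0)`, `b = ((0,1),0)`,
`x = ((0,0),1)`. -/
@[ext]
structure Gp (p : ℕ) where
  i : ZMod p
  j : ZMod p
  n : ZMod p

namespace Gp

variable {p : ℕ}

instance : Mul (Gp p) :=
  ⟨fun a b => ⟨a.i + b.i + a.n * b.j, a.j + b.j, a.n + b.n⟩⟩

instance : One (Gp p) := ⟨⟨0, 0, 0⟩⟩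

instance : Inv (Gp p) := ⟨fun a => ⟨-a.i + a.n * a.j, -a.j, -a.n⟩⟩

@[simp] theorem mul_i (a b : Gp p) : (a * b).i = a.i + b.i + a.n * b.j := rfl
@[simp] theorem mul_j (a b : Gp p) : (a * b).j = a.j + b.j := rfl
@[simp] theorem mul_n (a b : Gp p) : (a * b).n = a.n + b.n := rfl
@[simp] theorem one_i : (1 : Gp p).i = 0 := rfl
@[simp] theorem one_j : (1 : Gp p).j = 0 := rfl
@[simp] theorem one_n : (1 : Gp p).n = 0 := rfl
@[simp] theorem inv_i (a : Gp p) : a⁻¹.i = -a.i + a.n * a.j := rfl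
@[simp] theorem inv_j (a : Gp p) : a⁻¹.j = -a.j := rfl
@[simp] theorem inv_n (a : Gp p) : a⁻¹.n = -a.n := rfl

instance : Group (Gp p) :=
  Group.ofLeftAxioms
    (fun a b c => by ext <;> simp <;> ring)
    (fun a => by ext <;> simp)
    (fun a => by ext <;> simp)

end Gp

/-- The map `ω_{ζ,λ}(a^i b^j x^n, a^{i'} b^{j'} x^{n'}, a^{i''} b^{j''} x^{n''})
= ζ^{−n·j'·(i''+n'·j'') − C(n,2)·j'·j''} · λ^{j''·⌊(n+n')/p⌋}` on `G`, with all exponents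
taken as representatives in `{0,…,p−1}`, `C(n,2) = n(n−1)/2`. -/
def omegaZL {k : Type*} [Field k] (p : ℕ) (ζ lam : kˣ) : Gp p → Gp p → Gp p → kˣ :=
  fun g g' g'' =>
    ζ ^ (-((g.n.val * g'.j.val * (g''.i.val + g'.n.val * g''.j.val)
          + Nat.choose g.n.val 2 * (g'.j.val * g''.j.val) : ℕ) : ℤ))
      * lam ^ (g''.j.val * ((g.n.val + g'.n.val) / p))

section helpers

variable {k : Type*} [Field k]

private lemma zpow_congr_mod {p : ℕ} {ζ : kˣ} (hζ : ζ ^ p = 1) {m m' : ℤ}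
    (h : (p:ℤ) ∣ m - m') : ζ ^ m = ζ ^ m' := by
  obtain ⟨c, hc⟩ := h
  have hm : m = m' + p * c := by linarith
  rw [hm, zpow_add, zpow_mul, zpow_natCast, hζ, one_zpow, mul_one]

private lemma combine5 {p : ℕ} {ζ lam : kˣ} (hζ : ζ ^ p = 1) (hlam : lam ^ p = 1)
    (a1 a2 a3 a4 a5 b1 b2 b3 b4 b5 : ℤ)
    (ha : (p:ℤ) ∣ (a1+a2+a3) - (a4+a5)) (hb : (p:ℤ) ∣ (b1+b2+b3) - (b4+b5)) :
    (ζ^a1*lam^b1)*(ζ^a2*lam^b2)*(ζ^a3*lam^b3) = (ζ^a4*lam^b4)*(ζ^a5*lam^b5) := by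
  have l : (ζ^a1*lam^b1)*(ζ^a2*lam^b2)*(ζ^a3*lam^b3)
      = ζ^(a1+a2+a3)*lam^(b1+b2+b3) := by
    rw [mul_mul_mul_comm (ζ^a1) (lam^b1), mul_mul_mul_comm (ζ^a1*ζ^a2) (lam^b1*lam^b2),
      ← zpow_add, ← zpow_add, ← zpow_add, ← zpow_add]
  have r : (ζ^a4*lam^b4)*(ζ^a5*lam^b5) = ζ^(a4+a5)*lam^(b4+b5) := by
    rw [mul_mul_mul_comm, ← zpow_add, ← zpow_add]
  rw [l, r, zpow_congr_mod hζ ha, zpow_congr_mod hlam hb]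

private lemma two_mul_choose_two' (v : ℕ) : 2 * v.choose 2 = v * v - v := by
  induction v with
  | zero => rfl
  | succ n ih =>
    rw [Nat.choose_succ_succ, Nat.choose_one_right, Nat.mul_add, ih]
    have hle : n ≤ n * n := by nlinarith
    zify [hle, show n + 1 ≤ (n+1) * (n+1) from by nlinarith]
    ring

private lemma choose_cast' {p : ℕ} [Fact p.Prime] (h2 : (2 : ZMod p) ≠ 0) (v : ℕ) :
    ((v.choose 2 : ℕ) : ZMod p) = ((v : ZMod p) * v - v) / (2 : ZMod p) := by
  have hle : v ≤ v * v := by nlinarith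
  have key : ((2 * v.choose 2 : ℕ) : ZMod p) = (v : ZMod p) * v - v := by
    rw [two_mul_choose_two', Nat.cast_sub hle, Nat.cast_mul]
  rw [eq_div_iff h2, ← key]; push_cast; ring

private lemma val_add_decomp {p : ℕ} [NeZero p] (a b : ZMod p) :
    a.val + b.val = (a+b).val + p * ((a.val + b.val) / p) := by
  rw [ZMod.val_add]
  exact (Nat.mod_add_div _ _).symm

private lemma carry_assoc {p : ℕ} [NeZero p] (hp0 : 0 < p) (a b c : ZMod p) :
    (b.val + c.val)/p + (a.val + (b+c).val)/p
      = ((a+b).val + c.val)/p + (a.val + b.val)/p := by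
  have h1 := val_add_decomp b c
  have h2 := val_add_decomp a (b+c)
  have h3 := val_add_decomp a b
  have h4 := val_add_decomp (a+b) c
  rw [show a + (b+c) = (a+b)+c from (add_assoc a b c).symm] at h2
  refine Nat.eq_of_mul_eq_mul_left hp0 ?_
  rw [Nat.mul_add, Nat.mul_add]
  linarith [h1, h2, h3, h4]

end helpers

/-- For every pair `ζ, λ ∈ k` of `p`-th roots of unity, the map `ω_{ζ,λ}` is a
3-cocycle on `G = (Z/p × Z/p) ⋊ Z/p` with values in `kˣ`. -/
theorem statement6 {k : Type*} [Field k] [IsAlgClosed k] [CharZero k]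
    (p : ℕ) (hp : p.Prime) (hodd : Odd p)
    (ζ lam : kˣ) (hζ : ζ ^ p = 1) (hlam : lam ^ p = 1) :
    IsCocycle3 (omegaZL p ζ lam) := by
  haveI : Fact p.Prime := ⟨hp⟩
  have hp0 : 0 < p := hp.pos
  have h2 : (2 : ZMod p) ≠ 0 := by
    intro h
    have hd : p ∣ 2 := by
      have : ((2:ℕ) : ZMod p) = 0 := by exact_mod_cast h
      exact (ZMod.natCast_eq_zero_iff 2 p).mp this
    have : p = 2 := (Nat.prime_dvd_prime_iff_eq hp Nat.prime_two).mp hd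
    rw [this] at hodd
    exact (by norm_num : ¬ Odd 2) hodd
  intro x y z w
  simp only [omegaZL, Gp.mul_i, Gp.mul_j, Gp.mul_n]
  simp only [← zpow_natCast]
  refine combine5 hζ hlam _ _ _ _ _ _ _ _ _ _ ?_ ?_
  · rw [← ZMod.intCast_zmod_eq_zero_iff_dvd]
    push_cast
    simp only [choose_cast' h2, ZMod.natCast_val, ZMod.cast_id]
    field_simp
    ring
  · have keyZ : (((y.n.val + z.n.val)/p : ℕ) : ℤ) + (((x.n.val + (y.n+z.n).val)/p : ℕ) : ℤ)
        = ((((x.n+y.n).val + z.n.val)/p : ℕ) : ℤ) + (((x.n.val + y.n.val)/p : ℕ) : ℤ) := by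
      exact_mod_cast congrArg (Nat.cast : ℕ → ℤ) (carry_assoc hp0 x.n y.n z.n)
    have hjZ : (z.j.val : ℤ) + (w.j.val : ℤ)
        = ((z.j+w.j).val : ℤ) + (p : ℤ) * (((z.j.val + w.j.val)/p : ℕ) : ℤ) := by
      exact_mod_cast congrArg (Nat.cast : ℕ → ℤ) (val_add_decomp z.j w.j)
    refine ⟨(((z.j.val + w.j.val)/p : ℕ) : ℤ) * (((x.n.val + y.n.val)/p : ℕ) : ℤ), ?_⟩
    simp only [Nat.cast_mul]
    linear_combination ((w.j.val : ℕ) : ℤ) * keyZ + (((x.n.val + y.n.val)/p : ℕ) : ℤ) * hjZ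
end

section
/- Let F = (Z/p × Z/p) × {0} ≤ G, and for 0 ≤ j ≤ p−1 let L_j be the cyclic subgroup of G generated by b^j x = ((0,j),1). Then each L_j has order p, the subgroups L_0, …, L_{p−1} are pairwise non-conjugate in G, and every subgroup of G of order p that is not contained in F is conjugate in G to exactly one of L_0, …, L_{p−1}. In particular, G has exactly p conjugacy classes of subgroups of order p not contained in F. -/
/-- The subgroup `F = (Z/p × Z/p) × {0}` of `G`. -/
def Fsub (p : ℕ) : Subgroup (Gp p) where
  carrier := {g : Gp p | g.n = 0}
  mul_mem' := by
    intro a b ha hb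
    simp only [Set.mem_setOf_eq] at *
    simp [ha, hb]
  one_mem' := rfl
  inv_mem' := by
    intro a ha
    simp only [Set.mem_setOf_eq] at *
    simp [ha]

/-- For `0 ≤ j ≤ p−1`, the cyclic subgroup `L_j` of `G` generated by
`b^j x = ((0,j),1)`. -/
def Lsub (p : ℕ) (j : ZMod p) : Subgroup (Gp p) :=
  Subgroup.zpowers (⟨0, j, 1⟩ : Gp p)

namespace Gp

variable {p : ℕ}

theorem pow_j' (g : Gp p) (k : ℕ) : (g ^ k).j = (k : ZMod p) * g.j := by
  induction k with
  | zero => simp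
  | succ k ih => rw [pow_succ]; simp [ih]; push_cast; ring

theorem pow_n' (g : Gp p) (k : ℕ) : (g ^ k).n = (k : ZMod p) * g.n := by
  induction k with
  | zero => simp
  | succ k ih => rw [pow_succ]; simp [ih]; push_cast; ring

theorem zpow_j' (g : Gp p) (k : ℤ) : (g ^ k).j = (k : ZMod p) * g.j := by
  cases k with
  | ofNat k => rw [Int.ofNat_eq_coe, zpow_natCast, pow_j']; push_cast; ring
  | negSucc k =>
      rw [zpow_negSucc]
      simp [pow_j']
      push_cast; ring

theorem zpow_n' (g : Gp p) (k : ℤ) : (g ^ k).n = (k : ZMod p) * g.n := by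
  cases k with
  | ofNat k => rw [Int.ofNat_eq_coe, zpow_natCast, pow_n']; push_cast; ring
  | negSucc k =>
      rw [zpow_negSucc]
      simp [pow_n']
      push_cast; ring

theorem gen_pow_i (j : ZMod p) (k : ℕ) :
    2 * (((⟨0, j, 1⟩ : Gp p)) ^ (k + 1)).i = j * (k + 1) * k := by
  induction k with
  | zero => simp
  | succ k ih =>
      rw [pow_succ]
      simp only [mul_i]
      rw [mul_add, mul_add, ih]
      simp [pow_n' (⟨0, j, 1⟩ : Gp p) (k + 1)]
      push_cast; ring

end Gp

theorem mem_L {p : ℕ} {j : ZMod p} {g : Gp p} (h : g ∈ Lsub p j) : g.j = j * g.n := by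
  obtain ⟨k, rfl⟩ := h
  rw [Gp.zpow_j', Gp.zpow_n']
  simp [mul_comm]

/-- Each `L_j` has order `p` and is not contained in `F`; the `L_j` are pairwise
non-conjugate in `G`; and every subgroup of `G` of order `p` not contained in `F` is
conjugate in `G` to exactly one `L_j`.  (In particular, `G` has exactly `p` conjugacy
classes of subgroups of order `p` not contained in `F`.) -/
theorem statement8 (p : ℕ) (hp : p.Prime) (hodd : Odd p) :
    (∀ j : ZMod p, Nat.card (Lsub p j) = p ∧ ¬ Lsub p j ≤ Fsub p) ∧
    (∀ j j' : ZMod p,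
      (∃ g : Gp p, Subgroup.map (MulAut.conj g).toMonoidHom (Lsub p j) = Lsub p j') →
        j = j') ∧
    (∀ K : Subgroup (Gp p), Nat.card K = p → ¬ K ≤ Fsub p →
      ∃! j : ZMod p, ∃ g : Gp p,
        Subgroup.map (MulAut.conj g).toMonoidHom K = Lsub p j) := by
  haveI : Fact p.Prime := ⟨hp⟩
  haveI : NeZero p := ⟨hp.pos.ne'⟩
  haveI : Finite (Gp p) :=
    Finite.of_surjective (fun t : ZMod p × ZMod p × ZMod p => (⟨t.1, t.2.1, t.2.2⟩ : Gp p))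
      (fun g => ⟨(g.i, g.j, g.n), rfl⟩)
  have two_ne : (2 : ZMod p) ≠ 0 := by
    intro h
    have : (p : ℕ) ∣ 2 := by
      have := (ZMod.natCast_eq_zero_iff 2 p).mp (by exact_mod_cast h)
      exact this
    have := (Nat.prime_dvd_prime_iff_eq hp Nat.prime_two).mp this
    exact (Nat.not_even_iff_odd.mpr hodd) (by simp [this])
  have hne1 : ∀ g : Gp p, g.n ≠ 0 → g ≠ 1 := by
    intro g hg h
    exact hg (by rw [h]; rfl)
  -- order of a nontrivial element of a subgroup of order p
  have horder : ∀ (K : Subgroup (Gp p)), Nat.card K = p → ∀ g ∈ K, g ≠ 1 → orderOf g = p := by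
    intro K hK g hgK hg1
    have h1 : orderOf g ∣ p := by
      have := orderOf_dvd_natCard (⟨g, hgK⟩ : K)
      rwa [Subgroup.orderOf_mk, hK] at this
    rcases (hp.eq_one_or_self_of_dvd _ h1) with h | h
    · exact absurd (orderOf_eq_one_iff.mp h) hg1
    · exact h
  have hzpow : ∀ (K : Subgroup (Gp p)), Nat.card K = p → ∀ g ∈ K, g ≠ 1 →
      Subgroup.zpowers g = K := by
    intro K hK g hgK hg1
    refine Subgroup.eq_of_le_of_card_ge (Subgroup.zpowers_le.mpr hgK) ?_
    rw [hK, Nat.card_zpowers, horder K hK g hgK hg1]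
  have hgenord : ∀ j : ZMod p, orderOf (⟨0, j, 1⟩ : Gp p) = p := by
    intro j
    refine orderOf_eq_prime ?_ (fun h => ?_)
    · ext
      · have h2 := Gp.gen_pow_i j (p - 1)
        have hcast : (((p - 1 : ℕ) : ZMod p) + 1) = 0 := by
          calc (((p - 1 : ℕ) : ZMod p) + 1) = ((p - 1 + 1 : ℕ) : ZMod p) := by
                push_cast; ring
            _ = 0 := by rw [Nat.sub_add_cancel hp.one_le, ZMod.natCast_self]
        rw [Nat.sub_add_cancel hp.one_le, hcast, mul_zero, zero_mul] at h2
        have := mul_left_cancel₀ two_ne (h2.trans (mul_zero 2).symm)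
        simpa using this
      · rw [Gp.pow_j', ZMod.natCast_self]; simp
      · rw [Gp.pow_n', ZMod.natCast_self]; simp
    · exact hne1 ⟨0, j, 1⟩ (by simp) h
  -- conjugation invariants
  have hconj : ∀ g h : Gp p, (g * h * g⁻¹).j = h.j ∧ (g * h * g⁻¹).n = h.n := by
    intro g h; constructor <;> simp <;> ring
  refine ⟨?_, ?_, ?_⟩
  · intro j
    refine ⟨by rw [Lsub, Nat.card_zpowers, hgenord], fun h => ?_⟩
    have := h (Subgroup.mem_zpowers (⟨0, j, 1⟩ : Gp p))
    have h1 : (1 : ZMod p) = 0 := by simpa [Fsub] using this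
    exact one_ne_zero h1
  · intro j j' ⟨g, hg⟩
    have hmem : g * (⟨0, j, 1⟩ : Gp p) * g⁻¹ ∈ Lsub p j' := by
      rw [← hg]
      exact Subgroup.mem_map.mpr ⟨_, Subgroup.mem_zpowers _, rfl⟩
    have := mem_L hmem
    rw [(hconj g _).1, (hconj g _).2] at this
    simpa using this
  · intro K hK hKF
    obtain ⟨g, hgK, hgn⟩ : ∃ g ∈ K, g.n ≠ 0 := by
      by_contra hcon
      push_neg at hcon
      exact hKF fun x hx => hcon x hx
    set h : Gp p := g ^ (g.n⁻¹.val) with hh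
    have hhn : h.n = 1 := by
      rw [hh, Gp.pow_n', ZMod.natCast_val, ZMod.cast_id]
      exact inv_mul_cancel₀ hgn
    have hh1 : h ≠ 1 := hne1 h (by rw [hhn]; exact one_ne_zero)
    have hhK : h ∈ K := pow_mem hgK _
    have hKz : Subgroup.zpowers h = K := hzpow K hK h hhK hh1
    set c : Gp p := ⟨0, h.i, 0⟩ with hc
    have hchc : c * h * c⁻¹ = (⟨0, h.j, 1⟩ : Gp p) := by
      ext <;> simp [hc, hhn] <;> ring
    refine ⟨h.j, ⟨c, ?_⟩, ?_⟩
    · rw [← hKz, Lsub, ← hchc]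
      exact (MonoidHom.map_zpowers _ h)
    · intro j' ⟨g', hg'⟩
      have hmem : g' * h * g'⁻¹ ∈ Lsub p j' := by
        rw [← hg']
        exact Subgroup.mem_map.mpr ⟨_, hhK, rfl⟩
      have := mem_L hmem
      rw [(hconj g' _).1, (hconj g' _).2, hhn, mul_one] at this
      exact this.symm
end

section
/- Let ζ, λ ∈ k be p-th roots of unity and let 0 ≤ j ≤ p−1. Define ν_j : (Z/p)³ → kˣ by ν_j(n,m,ℓ) = ω_{ζ,λ}((b^j x)^{n̄}, (b^j x)^{m̄}, (b^j x)^{ℓ̄}). Then ν_j is a 3-cocycle on Z/p given explicitly by ν_j(n,m,ℓ) = ζ^{−j²·m̄·(n̄·C(ℓ̄,2) + ℓ̄·C(n̄,2) + n̄·m̄·ℓ̄)} · λ^{j·ℓ̄·⌊(n̄+m̄)/p⌋}, and ν_j is cohomologous to the 3-cocycle ω_{ζ^{−j²·d}·λ^j} on Z/p, where d = (p−1)p(2p−1)/6. -/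
/-- The pullback `ν_j(n,m,ℓ) = ω_{ζ,λ}((b^j x)^n̄, (b^j x)^m̄, (b^j x)^ℓ̄)` of `ω_{ζ,λ}`
along the subgroup generated by `b^j x = ((0,j),1)`, viewed as a map on `Z/p`. -/
def nuZL {k : Type*} [Field k] (p : ℕ) (ζ lam : kˣ) (j : ℕ) :
    ZMod p → ZMod p → ZMod p → kˣ :=
  fun n m ℓ =>
    omegaZL p ζ lam ((⟨0, (j : ZMod p), 1⟩ : Gp p) ^ n.val)
      ((⟨0, (j : ZMod p), 1⟩ : Gp p) ^ m.val) ((⟨0, (j : ZMod p), 1⟩ : Gp p) ^ ℓ.val)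

namespace S9

open Finset

def Ssq (N : ℕ) : ℕ := ∑ i ∈ Finset.range N, i ^ 2

lemma Ssq_succ (n : ℕ) : Ssq (n + 1) = Ssq n + n ^ 2 := by
  simp [Ssq, Finset.sum_range_succ]

lemma Ssq_add (a b : ℕ) : Ssq (a + b) + a * b = Ssq a + Ssq b + b * a ^ 2 + a * b ^ 2 := by
  induction b with
  | zero => simp [Ssq]
  | succ b ih =>
    have h1 : Ssq (a + (b + 1)) = Ssq (a + b) + (a + b) ^ 2 := by
      rw [← Nat.add_assoc, Ssq_succ]
    rw [h1, Ssq_succ]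
    zify at ih ⊢
    linear_combination ih

lemma six_Ssq (n : ℕ) : 6 * Ssq (n + 1) = n * (n + 1) * (2 * n + 1) := by
  induction n with
  | zero => simp [Ssq]
  | succ n ih =>
    rw [Ssq_succ, Nat.mul_add, ih]
    ring

lemma d_eq_Ssq {p : ℕ} (hp : 0 < p) : (p - 1) * p * (2 * p - 1) / 6 = Ssq p := by
  obtain ⟨q, rfl⟩ := Nat.exists_eq_add_of_le hp
  have h2 : 1 + q - 1 = q := by omega
  have h3 : 2 * (1 + q) - 1 = 2 * q + 1 := by omega
  have h1 : (1 + q - 1) * (1 + q) * (2 * (1 + q) - 1) = 6 * Ssq (q + 1) := by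
    rw [h2, h3, six_Ssq]; ring
  rw [h1]
  simp [Nat.add_comm, Nat.mul_div_cancel_left]

lemma choose_two (a : ℕ) : a.choose 2 * 2 + a = a * a := by
  induction a with
  | zero => simp
  | succ a ih =>
    rw [Nat.choose_succ_succ, Nat.choose_one_right]
    zify at ih ⊢
    linear_combination ih



lemma units_zpow_congr {k : Type*} [Field k] {p : ℕ} [NeZero p] (u : kˣ)
    (hu : u ^ p = 1) {a b : ℤ} (h : ((a : ZMod p) : ZMod p) = (b : ZMod p)) :
    u ^ a = u ^ b := by
  have hd : ((b - a : ℤ) : ZMod p) = 0 := by push_cast; rw [h]; ring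
  rw [ZMod.intCast_zmod_eq_zero_iff_dvd] at hd
  obtain ⟨c, hc⟩ := hd
  have hb : b = a + (p : ℤ) * c := by linarith
  rw [hb, zpow_add, zpow_mul, zpow_natCast, hu, one_zpow, mul_one]

lemma units_pow_congr {k : Type*} [Field k] {p : ℕ} [NeZero p] (u : kˣ)
    (hu : u ^ p = 1) {a b : ℕ} (h : ((a : ZMod p) : ZMod p) = (b : ZMod p)) :
    u ^ a = u ^ b := by
  have := units_zpow_congr (p := p) u hu (a := (a : ℤ)) (b := (b : ℤ)) (by push_cast; exact_mod_cast h)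
  simpa [zpow_natCast] using this

lemma gen_pow {p : ℕ} (j : ℕ) (N : ℕ) :
    (⟨0, (j : ZMod p), 1⟩ : Gp p) ^ N
      = ⟨((N.choose 2 * j : ℕ) : ZMod p), ((N * j : ℕ) : ZMod p), (N : ZMod p)⟩ := by
  induction N with
  | zero =>
    apply Gp.ext <;> simp
  | succ N ih =>
    rw [pow_succ, ih]
    apply Gp.ext <;>
      simp only [Gp.mul_i, Gp.mul_j, Gp.mul_n, Nat.choose_succ_succ, Nat.choose_one_right] <;>
      push_cast <;> ring

end S9

namespace S9

lemma vcast {p : ℕ} [NeZero p] (v : ZMod p) : ((v.val : ℕ) : ZMod p) = v := by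
  rw [ZMod.natCast_val, ZMod.cast_id]

lemma nu_formula {k : Type*} [Field k] {p : ℕ} [NeZero p] (ζ lam : kˣ)
    (hζ : ζ ^ p = 1) (hlam : lam ^ p = 1) (j : ℕ) (n m ℓ : ZMod p) :
    nuZL p ζ lam j n m ℓ
      = ζ ^ (-((j ^ 2 * (m.val * (n.val * Nat.choose ℓ.val 2 + ℓ.val * Nat.choose n.val 2
            + n.val * m.val * ℓ.val)) : ℕ) : ℤ))
        * lam ^ (j * (ℓ.val * ((n.val + m.val) / p))) := by
  unfold nuZL omegaZL
  rw [gen_pow j n.val, gen_pow j m.val, gen_pow j ℓ.val]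
  dsimp only
  simp only [ZMod.val_natCast]
  rw [Nat.mod_eq_of_lt (ZMod.val_lt n), Nat.mod_eq_of_lt (ZMod.val_lt m)]
  congr 1
  · apply units_zpow_congr ζ hζ
    push_cast [ZMod.natCast_mod]
    ring
  · apply units_pow_congr lam hlam
    push_cast [ZMod.natCast_mod]
    ring



lemma ccast {p : ℕ} [NeZero p] (hh : ZMod p) (h2 : 2 * hh = 1) (v : ZMod p) :
    ((Nat.choose v.val 2 : ℕ) : ZMod p) = hh * (v * v - v) := by
  have hc' : ((v.val.choose 2 : ℕ) : ZMod p) * 2 + v = v * v := by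
    have := congrArg (Nat.cast : ℕ → ZMod p) (choose_two v.val)
    push_cast at this
    rw [vcast] at this
    exact_mod_cast this
  linear_combination hh * hc' - ((v.val.choose 2 : ℕ) : ZMod p) * h2

lemma add_mod_div {p : ℕ} (hp : 0 < p) (a b : ℕ) :
    (a + b % p) / p + b / p = (a + b) / p := by
  conv_rhs => rw [← Nat.mod_add_div b p, ← Nat.add_assoc]
  rw [Nat.add_mul_div_left _ _ hp]

lemma mod_add_div' {p : ℕ} (hp : 0 < p) (a b : ℕ) :
    (a % p + b) / p + a / p = (a + b) / p := by
  rw [Nat.add_comm (a % p) b, Nat.add_comm a b]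
  exact add_mod_div hp b a

lemma mul_key {k : Type*} [Field k] (ζ lam : kˣ) {a1 a2 a3 a4 a5 : ℤ} {b1 b2 b3 b4 b5 : ℕ}
    (h1 : ζ ^ (a1 + a2 + a3) = ζ ^ (a4 + a5)) (h2 : lam ^ (b1 + b2 + b3) = lam ^ (b4 + b5)) :
    (ζ ^ a1 * lam ^ b1) * (ζ ^ a2 * lam ^ b2) * (ζ ^ a3 * lam ^ b3)
      = (ζ ^ a4 * lam ^ b4) * (ζ ^ a5 * lam ^ b5) := by
  rw [mul_mul_mul_comm (ζ ^ a1) (lam ^ b1) (ζ ^ a2) (lam ^ b2),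
    mul_mul_mul_comm (ζ ^ a1 * ζ ^ a2) (lam ^ b1 * lam ^ b2) (ζ ^ a3) (lam ^ b3),
    mul_mul_mul_comm (ζ ^ a4) (lam ^ b4) (ζ ^ a5) (lam ^ b5),
    ← zpow_add, ← zpow_add, ← pow_add, ← pow_add, ← zpow_add, ← pow_add, h1, h2]

lemma nu_cocycle {k : Type*} [Field k] {p : ℕ} (hp : p.Prime) (hodd : Odd p)
    (ζ lam : kˣ) (hζ : ζ ^ p = 1) (hlam : lam ^ p = 1) (j : ℕ) :
    IsAddCocycle3 (nuZL p ζ lam j) := by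
  haveI : Fact p.Prime := ⟨hp⟩
  haveI : NeZero p := ⟨hp.pos.ne'⟩
  have hp2 : 0 < p := hp.pos
  obtain ⟨tt, htt⟩ := hodd
  have hhnat : 2 * ((p + 1) / 2) = p + 1 := by omega
  have h2 : (2 : ZMod p) * (((p + 1) / 2 : ℕ) : ZMod p) = 1 := by
    have h := congrArg (Nat.cast : ℕ → ZMod p) hhnat
    push_cast at h
    rw [ZMod.natCast_self] at h
    rw [h]; ring
  have hinv : (((p + 1) / 2 : ℕ) : ZMod p) = (2 : ZMod p)⁻¹ :=
    eq_inv_of_mul_eq_one_left (by rw [mul_comm]; exact h2)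
  have two_ne : (2 : ZMod p) ≠ 0 := by
    intro H; rw [H, zero_mul] at h2; exact zero_ne_one h2
  intro x y z w
  rw [nu_formula ζ lam hζ hlam j y z w, nu_formula ζ lam hζ hlam j x (y + z) w,
    nu_formula ζ lam hζ hlam j x y z, nu_formula ζ lam hζ hlam j (x + y) z w,
    nu_formula ζ lam hζ hlam j x y (z + w)]
  apply mul_key
  · apply units_zpow_congr ζ hζ
    push_cast
    simp only [ccast (((p + 1) / 2 : ℕ) : ZMod p) h2, vcast]
    rw [hinv]
    field_simp
    ring
  · apply units_pow_congr lam hlam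
    simp only [ZMod.val_add]
    have E2 := congrArg (Nat.cast : ℕ → ZMod p) (add_mod_div hp2 x.val (y.val + z.val))
    have E4 := congrArg (Nat.cast : ℕ → ZMod p) (mod_add_div' hp2 (x.val + y.val) z.val)
    rw [← Nat.add_assoc] at E2
    push_cast at E2 E4 ⊢
    simp only [ZMod.natCast_mod] at *
    push_cast at E2 E4 ⊢
    linear_combination ((j : ZMod p) * (w.val : ZMod p)) * E2
      - ((j : ZMod p) * (w.val : ZMod p)) * E4


end S9

namespace S9

lemma Ssq_val_add {p : ℕ} [NeZero p] (x y : ZMod p) :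
    ((Ssq ((x + y).val) : ℕ) : ZMod p)
      = ((Ssq x.val : ℕ) : ZMod p) + ((Ssq y.val : ℕ) : ZMod p)
        + (y.val : ZMod p) * (x.val : ZMod p) ^ 2 + (x.val : ZMod p) * (y.val : ZMod p) ^ 2
        - (x.val : ZMod p) * (y.val : ZMod p)
        - ((Ssq p : ℕ) : ZMod p) * (((x.val + y.val) / p : ℕ) : ZMod p) := by
  have hp2 : 0 < p := Nat.pos_of_ne_zero (NeZero.ne p)
  have hva : (x + y).val = (x.val + y.val) % p := ZMod.val_add x y
  have hlt : x.val + y.val < p * 2 := by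
    have h1 := ZMod.val_lt x; have h2 := ZMod.val_lt y; omega
  have hdm := Nat.div_add_mod (x.val + y.val) p
  have hc : (x.val + y.val) / p = 0 ∨ (x.val + y.val) / p = 1 := by
    have h := Nat.div_lt_of_lt_mul hlt
    revert h
    generalize (x.val + y.val) / p = q
    intro h
    omega
  have hSadd := congrArg (Nat.cast : ℕ → ZMod p) (Ssq_add x.val y.val)
  push_cast at hSadd
  rcases hc with hc | hc
  · rw [hc] at hdm
    simp only [Nat.mul_zero, Nat.zero_add] at hdm
    rw [hva, hdm, hc]
    push_cast
    linear_combination hSadd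
  · rw [hc] at hdm
    simp only [Nat.mul_one] at hdm
    have hS2n := Ssq_add p ((x.val + y.val) % p)
    rw [hdm] at hS2n
    have hS2 := congrArg (Nat.cast : ℕ → ZMod p) hS2n
    push_cast [ZMod.natCast_self] at hS2
    rw [hva, hc]
    push_cast
    linear_combination hSadd - hS2

lemma mul_key2 {k : Type*} [Field k] (ζ lam : kˣ) {a c e1 e2 e3 e4 : ℤ} {b : ℕ}
    (h : ζ ^ (a - c) = ζ ^ (e1 + e2 - e3 - e4)) :
    ζ ^ a * lam ^ b * (ζ ^ c * lam ^ b)⁻¹ = ζ ^ e1 * ζ ^ e2 * (ζ ^ e3)⁻¹ * (ζ ^ e4)⁻¹ := by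
  calc ζ ^ a * lam ^ b * (ζ ^ c * lam ^ b)⁻¹
      = (ζ ^ a * (ζ ^ c)⁻¹) * (lam ^ b * (lam ^ b)⁻¹) := by
        rw [mul_inv, mul_mul_mul_comm]
    _ = ζ ^ (a - c) := by rw [mul_inv_cancel, mul_one, ← zpow_sub]
    _ = ζ ^ (e1 + e2 - e3 - e4) := h
    _ = ζ ^ e1 * ζ ^ e2 * (ζ ^ e3)⁻¹ * (ζ ^ e4)⁻¹ := by
        rw [zpow_sub, zpow_sub, zpow_add]

lemma nu_cobound {k : Type*} [Field k] {p : ℕ} (hp : p.Prime) (hodd : Odd p)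
    (ζ lam : kˣ) (hζ : ζ ^ p = 1) (hlam : lam ^ p = 1) (j : ℕ) :
    AddCohomologous3 (nuZL p ζ lam j)
      (omegaStd p (ζ ^ (-((j ^ 2 * ((p - 1) * p * (2 * p - 1) / 6) : ℕ) : ℤ)) * lam ^ j)) := by
  haveI : Fact p.Prime := ⟨hp⟩
  haveI : NeZero p := ⟨hp.pos.ne'⟩
  have hp2 : 0 < p := hp.pos
  obtain ⟨tt, htt⟩ := hodd
  have hhnat : 2 * ((p + 1) / 2) = p + 1 := by omega
  have h2 : (2 : ZMod p) * (((p + 1) / 2 : ℕ) : ZMod p) = 1 := by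
    have h := congrArg (Nat.cast : ℕ → ZMod p) hhnat
    push_cast at h
    rw [ZMod.natCast_self] at h
    rw [h]; ring
  have hinv : (((p + 1) / 2 : ℕ) : ZMod p) = (2 : ZMod p)⁻¹ :=
    eq_inv_of_mul_eq_one_left (by rw [mul_comm]; exact h2)
  have two_ne : (2 : ZMod p) ≠ 0 := by
    intro H; rw [H, zero_mul] at h2; exact zero_ne_one h2
  rw [d_eq_Ssq hp2]
  unfold AddCohomologous3 IsAddCoboundary3
  refine ⟨fun a b => ζ ^ ((j ^ 2 * (Ssq a.val * b.val
      + ((p + 1) / 2) ^ 2 * a.val ^ 2 * b.val ^ 2) : ℕ) : ℤ), fun n m ℓ => ?_⟩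
  dsimp only
  rw [nu_formula ζ lam hζ hlam j n m ℓ]
  unfold omegaStd
  rw [mul_pow, ← pow_mul lam j (ℓ.val * ((n.val + m.val) / p))]
  have hz : (ζ ^ (-((j ^ 2 * Ssq p : ℕ) : ℤ))) ^ (ℓ.val * ((n.val + m.val) / p))
      = ζ ^ ((-((j ^ 2 * Ssq p : ℕ) : ℤ)) * ((ℓ.val * ((n.val + m.val) / p) : ℕ) : ℤ)) := by
    rw [← zpow_natCast (ζ ^ (-((j ^ 2 * Ssq p : ℕ) : ℤ))) (ℓ.val * ((n.val + m.val) / p)),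
      ← zpow_mul]
  rw [hz]
  apply mul_key2
  apply units_zpow_congr ζ hζ
  simp only [Int.cast_mul, Int.cast_add, Int.cast_sub, Int.cast_neg, Int.cast_pow,
    Int.cast_natCast, Nat.cast_mul, Nat.cast_add, Nat.cast_pow]
  rw [Ssq_val_add n m]
  simp only [ccast (((p + 1) / 2 : ℕ) : ZMod p) h2, ZMod.natCast_val, ZMod.cast_id]
  rw [hinv]
  field_simp
  ring

end S9

/-- For `p`-th roots of unity `ζ, λ ∈ k` and `0 ≤ j ≤ p−1`, the pullback `ν_j` of
`ω_{ζ,λ}` along `n ↦ (b^j x)^n̄` is a 3-cocycle on `Z/p`, it is given explicitly by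
`ν_j(n,m,ℓ) = ζ^{−j²·m̄·(n̄·C(ℓ̄,2) + ℓ̄·C(n̄,2) + n̄·m̄·ℓ̄)} · λ^{j·ℓ̄·⌊(n̄+m̄)/p⌋}`, and it
is cohomologous to `ω_{ζ^{−j²·d}·λ^j}` where `d = (p−1)p(2p−1)/6`. -/
theorem statement9 {k : Type*} [Field k] [IsAlgClosed k] [CharZero k]
    (p : ℕ) (hp : p.Prime) (hodd : Odd p)
    (ζ lam : kˣ) (hζ : ζ ^ p = 1) (hlam : lam ^ p = 1)
    (j : ℕ) (hj : j ≤ p - 1) :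
    IsAddCocycle3 (nuZL p ζ lam j) ∧
    (∀ n m ℓ : ZMod p,
      nuZL p ζ lam j n m ℓ
        = ζ ^ (-((j ^ 2 * (m.val * (n.val * Nat.choose ℓ.val 2 + ℓ.val * Nat.choose n.val 2
              + n.val * m.val * ℓ.val)) : ℕ) : ℤ))
          * lam ^ (j * (ℓ.val * ((n.val + m.val) / p)))) ∧
    AddCohomologous3 (nuZL p ζ lam j)
      (omegaStd p (ζ ^ (-((j ^ 2 * ((p - 1) * p * (2 * p - 1) / 6) : ℕ) : ℤ)) * lam ^ j)) := by
  haveI : Fact p.Prime := ⟨hp⟩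
  haveI : NeZero p := ⟨hp.pos.ne'⟩
  exact ⟨S9.nu_cocycle hp hodd ζ lam hζ hlam j,
    fun n m ℓ => S9.nu_formula ζ lam hζ hlam j n m ℓ,
    S9.nu_cobound hp hodd ζ lam hζ hlam j⟩
end

section
/- Let ζ ∈ k be a primitive p-th root of unity, λ ∈ k a p-th root of unity, 1 ≤ j ≤ p−1, and let ν_j(n,m,ℓ) = ω_{ζ,λ}((b^j x)^{n̄}, (b^j x)^{m̄}, (b^j x)^{ℓ̄}) be the pullback 3-cocycle on Z/p. If p > 3, then ν_j is a coboundary if and only if λ = 1. If p = 3, then ν_j is cohomologous to ω_{ζ^{j²}·λ^j}; in particular, for p = 3: if λ = 1 then ν_j is not a coboundary for j ∈ {1,2}, while if λ ≠ 1 then there is exactly one j ∈ {1,2} for which ν_j is a coboundary. -/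
section Aux
open Finset
variable {k : Type*} [Field k]

lemma zmod_cast_val {p : ℕ} [NeZero p] (a : ZMod p) : ((a.val : ℕ) : ZMod p) = a :=
  ZMod.natCast_rightInverse a

lemma zeta_zpow_congr {p : ℕ} [NeZero p] {ζ : kˣ} (hζ : IsPrimitiveRoot ζ p)
    {a b : ℤ} (h : ((a : ZMod p)) = ((b : ZMod p))) : ζ ^ a = ζ ^ b := by
  have hd : ((p : ℕ) : ℤ) ∣ a - b := by
    rwa [← ZMod.intCast_zmod_eq_zero_iff_dvd, Int.cast_sub, sub_eq_zero]
  have h1 : ζ ^ (a - b) = 1 := (hζ.zpow_eq_one_iff_dvd _).mpr hd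
  have hab : a - b + b = a := by ring
  rw [← hab, zpow_add, h1, one_mul]

lemma zeta_pow_congr {p : ℕ} [NeZero p] {ζ : kˣ} (hζ : IsPrimitiveRoot ζ p)
    {a b : ℕ} (h : ((a : ZMod p)) = ((b : ZMod p))) : ζ ^ a = ζ ^ b := by
  rw [← zpow_natCast ζ a, ← zpow_natCast ζ b]
  exact zeta_zpow_congr hζ (by push_cast; exact_mod_cast h)

lemma lam_pow_mod {p : ℕ} {lam : kˣ} (hlam : lam ^ p = 1) (a : ℕ) :
    lam ^ a = lam ^ (a % p) := by
  conv_lhs => rw [← Nat.div_add_mod a p]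
  rw [pow_add, pow_mul, hlam, one_pow, one_mul]

lemma lam_pow_congr {p : ℕ} [NeZero p] {lam : kˣ} (hlam : lam ^ p = 1) {a b : ℕ}
    (h : ((a : ZMod p)) = ((b : ZMod p))) : lam ^ a = lam ^ b := by
  rw [lam_pow_mod hlam a, lam_pow_mod hlam b, (ZMod.natCast_eq_natCast_iff' a b p).mp h]

lemma two_mul_choose_two (N : ℕ) : 2 * N.choose 2 = N * (N - 1) := by
  induction N with
  | zero => rfl
  | succ m ih =>
    rw [Nat.choose_succ_succ, Nat.choose_one_right, Nat.mul_add, ih, Nat.succ_sub_one]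
    cases m with
    | zero => rfl
    | succ n => rw [Nat.succ_sub_one]; ring

lemma choose_two_cast {p : ℕ} [Fact p.Prime] (hp2 : (2 : ZMod p) ≠ 0) (N : ℕ) :
    ((N.choose 2 : ℕ) : ZMod p) = (N : ZMod p) * ((N : ZMod p) - 1) * (2 : ZMod p)⁻¹ := by
  cases N with
  | zero => simp
  | succ m =>
    have h := congrArg (Nat.cast : ℕ → ZMod p) (two_mul_choose_two (m + 1))
    rw [Nat.succ_sub_one] at h
    push_cast at h
    rw [eq_mul_inv_iff_mul_eq₀ hp2]
    push_cast
    linear_combination h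

lemma pow2 (u : kˣ) (a b : ℕ) : u ^ a * (u ^ b)⁻¹ = u ^ ((a : ℤ) - b) := by
  rw [show ((a : ℤ) - b) = (a : ℤ) + (-(b : ℤ)) by ring, zpow_add, zpow_neg,
    zpow_natCast, zpow_natCast]

lemma pow4 (u : kˣ) (c d e f : ℕ) :
    u ^ c * u ^ d * (u ^ e)⁻¹ * (u ^ f)⁻¹ = u ^ ((c : ℤ) + d - e - f) := by
  rw [show ((c : ℤ) + d - e - f) = (c : ℤ) + (d : ℤ) + (-(e : ℤ)) + (-(f : ℤ)) by ring,
    zpow_add, zpow_add, zpow_add, zpow_neg, zpow_neg, zpow_natCast, zpow_natCast,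
    zpow_natCast, zpow_natCast]

lemma units_rearrange (a b c : kˣ) : a * c * (b * c)⁻¹ = a * b⁻¹ := by
  rw [mul_inv, ← mul_assoc, mul_right_comm a c b⁻¹, mul_assoc, mul_inv_cancel, mul_one]

end Aux

section Aux2
open Finset
variable {k : Type*} [Field k]

lemma gp_pow {p : ℕ} (j : ZMod p) (N : ℕ) :
    (⟨0, j, 1⟩ : Gp p) ^ N = ⟨j * ((N.choose 2 : ℕ) : ZMod p), j * (N : ZMod p), (N : ZMod p)⟩ := by
  induction N with
  | zero => ext <;> simp
  | succ m ih =>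
    rw [pow_succ, ih]
    ext
    · simp only [Gp.mul_i]
      rw [Nat.choose_succ_succ, Nat.choose_one_right]
      push_cast
      ring
    · simp only [Gp.mul_j]
      push_cast
      ring
    · simp only [Gp.mul_n]
      push_cast
      ring

/-- The `ζ`-exponent of `ν_j` as a `ZMod p`-valued polynomial. -/
def Fz (p : ℕ) (j : ℕ) (x y z : ZMod p) : ZMod p :=
  -((j : ZMod p) ^ 2 * (x * y * z * (z - 1) + x * (x - 1) * y * z) * (2 : ZMod p)⁻¹
    + (j : ZMod p) ^ 2 * x * y ^ 2 * z)

lemma nu_eq {p : ℕ} [Fact p.Prime] (hp2 : (2 : ZMod p) ≠ 0) {ζ lam : kˣ}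
    (hζ : IsPrimitiveRoot ζ p) (hlam : lam ^ p = 1) (j : ℕ) (x y z : ZMod p) :
    nuZL p ζ lam j x y z
      = ζ ^ (Fz p j x y z).val * lam ^ (j * z.val * ((x.val + y.val) / p)) := by
  unfold nuZL omegaZL
  rw [gp_pow, gp_pow, gp_pow]
  dsimp only
  simp only [zmod_cast_val]
  congr 1
  · rw [← zpow_natCast ζ ((Fz p j x y z).val)]
    apply zeta_zpow_congr hζ
    push_cast
    simp only [zmod_cast_val, choose_two_cast hp2]
    unfold Fz
    ring
  · apply lam_pow_congr hlam
    push_cast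
    simp only [zmod_cast_val]

end Aux2

section Aux3
open Finset
variable {k : Type*} [Field k]

lemma prod_inv_eq_one {A : Type*} [AddCommGroup A] [Fintype A] {ω : A → A → A → kˣ}
    (h : IsAddCoboundary3 ω) (c : A) : ∏ i : A, ω c i c = 1 := by
  obtain ⟨t, ht⟩ := h
  have h1 : ∏ i : A, t (c + i) c = ∏ i : A, t i c :=
    Fintype.prod_equiv (Equiv.addLeft c) (fun i => t (c + i) c) (fun i => t i c)
      (fun i => rfl)
  have h2 : ∏ i : A, t c (i + c) = ∏ i : A, t c i :=
    Fintype.prod_equiv (Equiv.addRight c) (fun i => t c (i + c)) (fun i => t c i)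
      (fun i => rfl)
  calc ∏ i : A, ω c i c
      = ∏ i : A, (t i c * t c (i + c) * (t (c + i) c)⁻¹ * (t c i)⁻¹) :=
        Finset.prod_congr rfl fun i _ => ht c i c
    _ = (∏ i : A, t i c) * (∏ i : A, t c (i + c)) * (∏ i : A, t (c + i) c)⁻¹
          * (∏ i : A, t c i)⁻¹ := by
        rw [← Finset.prod_inv_distrib, ← Finset.prod_inv_distrib,
          ← Finset.prod_mul_distrib, ← Finset.prod_mul_distrib, ← Finset.prod_mul_distrib]
    _ = 1 := by
        rw [h1, h2, mul_assoc, mul_mul_mul_comm, mul_inv_cancel, mul_inv_cancel, one_mul]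

lemma cast_prime_ne_zero {p q : ℕ} [Fact p.Prime] (hq : q.Prime) (h : p ≠ q) :
    ((q : ℕ) : ZMod p) ≠ 0 := by
  intro h0
  rw [ZMod.natCast_eq_zero_iff] at h0
  exact h ((Nat.prime_dvd_prime_iff_eq Fact.out hq).mp h0)

lemma sum_eps {p : ℕ} [Fact p.Prime] : ∑ i : ZMod p, (1 + i.val) / p = 1 := by
  classical
  have hp1 : 1 < p := (Fact.out : p.Prime).one_lt
  have hneg : ((p - 1 : ℕ) : ZMod p) = -1 := by
    rw [Nat.cast_sub (by omega), ZMod.natCast_self, Nat.cast_one, zero_sub]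
  have hval : (-1 : ZMod p).val = p - 1 := by
    rw [← hneg, ZMod.val_cast_of_lt (by omega)]
  rw [Finset.sum_eq_single_of_mem (-1 : ZMod p) (Finset.mem_univ _)]
  · rw [hval, show 1 + (p - 1) = p by omega, Nat.div_self (by omega)]
  · intro b _ hb
    apply Nat.div_eq_of_lt
    have hlt : b.val < p := b.val_lt
    have : b.val ≠ p - 1 := by
      intro hv
      exact hb (by rw [← zmod_cast_val b, hv, hneg])
    omega

lemma sum_sq_eq_zero {p : ℕ} [Fact p.Prime] (hgt : 3 < p) : ∑ i : ZMod p, i ^ 2 = 0 := by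
  have h2 : (2 : ZMod p) ≠ 0 := by
    simpa using cast_prime_ne_zero Nat.prime_two (by omega)
  have h3 : (3 : ZMod p) ≠ 0 := by
    simpa using cast_prime_ne_zero Nat.prime_three (by omega)
  have key : ∑ i : ZMod p, ((2 : ZMod p) * i) ^ 2 = ∑ i : ZMod p, i ^ 2 :=
    Fintype.sum_equiv (Equiv.mulLeft₀ (2 : ZMod p) h2)
      (fun i => ((2 : ZMod p) * i) ^ 2) (fun i => i ^ 2) (fun i => by simp [mul_pow])
  have expand : ∑ i : ZMod p, ((2 : ZMod p) * i) ^ 2 = 4 * ∑ i : ZMod p, i ^ 2 := by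
    rw [Finset.mul_sum]
    exact Finset.sum_congr rfl fun i _ => by ring
  have h30 : (3 : ZMod p) * ∑ i : ZMod p, i ^ 2 = 0 := by
    linear_combination key - expand
  exact (mul_eq_zero.mp h30).resolve_left h3

lemma nu_prod {p : ℕ} [Fact p.Prime] (hp2 : (2 : ZMod p) ≠ 0) {ζ lam : kˣ}
    (hζ : IsPrimitiveRoot ζ p) (hlam : lam ^ p = 1) (j : ℕ) :
    ∏ i : ZMod p, nuZL p ζ lam j 1 i 1
      = ζ ^ ((-(j : ZMod p) ^ 2 * ∑ i : ZMod p, i ^ 2).val) * lam ^ j := by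
  have hp1 : 1 < p := (Fact.out : p.Prime).one_lt
  haveI : Fact (1 < p) := ⟨hp1⟩
  have hv1 : (1 : ZMod p).val = 1 := ZMod.val_one p
  calc ∏ i : ZMod p, nuZL p ζ lam j 1 i 1
      = ∏ i : ZMod p, (ζ ^ (Fz p j 1 i 1).val * lam ^ (j * ((1 + i.val) / p))) := by
        refine Finset.prod_congr rfl fun i _ => ?_
        rw [nu_eq hp2 hζ hlam j, hv1, mul_one]
    _ = (∏ i : ZMod p, ζ ^ (Fz p j 1 i 1).val)
          * ∏ i : ZMod p, lam ^ (j * ((1 + i.val) / p)) := Finset.prod_mul_distrib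
    _ = ζ ^ (∑ i : ZMod p, (Fz p j 1 i 1).val)
          * lam ^ (∑ i : ZMod p, j * ((1 + i.val) / p)) := by
        rw [Finset.prod_pow_eq_pow_sum, Finset.prod_pow_eq_pow_sum]
    _ = ζ ^ ((-(j : ZMod p) ^ 2 * ∑ i : ZMod p, i ^ 2).val) * lam ^ j := by
        congr 1
        · apply zeta_pow_congr hζ
          push_cast
          simp only [zmod_cast_val]
          calc ∑ i : ZMod p, Fz p j 1 i 1 = ∑ i : ZMod p, -(j : ZMod p) ^ 2 * i ^ 2 :=
                Finset.sum_congr rfl fun i _ => by unfold Fz; ring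
            _ = -(j : ZMod p) ^ 2 * ∑ i : ZMod p, i ^ 2 := by rw [Finset.mul_sum]
        · rw [← Finset.mul_sum, sum_eps, mul_one]

lemma cob_mul_cob {A : Type*} [AddGroup A] {ω ω' : A → A → A → kˣ}
    (h : IsAddCoboundary3 ω) (h' : IsAddCoboundary3 ω') :
    IsAddCoboundary3 (fun x y z => ω x y z * ω' x y z) := by
  obtain ⟨t, ht⟩ := h
  obtain ⟨s, hs⟩ := h'
  refine ⟨fun x y => t x y * s x y, fun x y z => ?_⟩
  dsimp only
  rw [ht x y z, hs x y z, Units.ext_iff]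
  push_cast
  field_simp

lemma cob_of_cohom {A : Type*} [AddGroup A] {ω ω' : A → A → A → kˣ}
    (h : AddCohomologous3 ω ω') (h' : IsAddCoboundary3 ω') : IsAddCoboundary3 ω := by
  have := cob_mul_cob h h'
  obtain ⟨t, ht⟩ := this
  refine ⟨t, fun x y z => ?_⟩
  have h1 := ht x y z
  simp only [inv_mul_cancel_right] at h1
  exact h1

end Aux3

section Aux4
open Finset
variable {k : Type*} [Field k]

/-- Explicit 2-cochain table used for `p = 3`. -/
def s3fun : ZMod 3 → ZMod 3 → ZMod 3 := fun x y => if x = 2 ∧ y = 1 then 1 else 0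

/-- Inverse-free form of `Fz 3 1`. -/
def F3 (x y z : ZMod 3) : ZMod 3 :=
  -((x * y * z * (z - 1) + x * (x - 1) * y * z) * 2 + x * y ^ 2 * z)

lemma inv2_3 : ((2 : ZMod 3))⁻¹ = 2 :=
  inv_eq_of_mul_eq_one_right (by decide)

lemma zmod3_two_ne : (2 : ZMod 3) ≠ 0 := by decide

lemma zmod3_val_aux : ((-(1 : ZMod 3)) * ∑ i : ZMod 3, i ^ 2).val = 1 := by decide

lemma zmod3_sq (j : ℕ) (h1 : 1 ≤ j) (h2 : j ≤ 2) : ((j : ℕ) : ZMod 3) ^ 2 = 1 := by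
  interval_cases j <;> decide

lemma p3_key : ∀ x y z : ZMod 3,
    F3 x y z - z * (((x.val + y.val) / 3 : ℕ) : ZMod 3)
      = s3fun y z + s3fun x (y + z) - s3fun (x + y) z - s3fun x y := by decide

lemma omegaStd_one_cob (N : ℕ) : IsAddCoboundary3 (omegaStd N (1 : kˣ)) :=
  ⟨fun _ _ => 1, fun x y z => by simp [omegaStd]⟩

lemma omegaStd_cob_theta {p : ℕ} [Fact p.Prime] {θ : kˣ}
    (h : IsAddCoboundary3 (omegaStd p θ)) : θ = 1 := by
  haveI : Fact (1 < p) := ⟨(Fact.out : p.Prime).one_lt⟩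
  have hI := prod_inv_eq_one h (1 : ZMod p)
  have hcalc : ∏ i : ZMod p, omegaStd p θ 1 i 1
      = θ ^ (∑ i : ZMod p, (1 + i.val) / p) := by
    unfold omegaStd
    rw [← Finset.prod_pow_eq_pow_sum]
    exact Finset.prod_congr rfl fun i _ => by rw [ZMod.val_one, one_mul]
  rw [hcalc, sum_eps, pow_one] at hI
  exact hI

lemma p3_cohom {ζ lam : kˣ} (hζ : IsPrimitiveRoot ζ 3) (hlam : lam ^ 3 = 1)
    (j : ℕ) (hj : ((j : ℕ) : ZMod 3) ^ 2 = 1) :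
    AddCohomologous3 (nuZL 3 ζ lam j) (omegaStd 3 (ζ ^ j ^ 2 * lam ^ j)) := by
  haveI : Fact (Nat.Prime 3) := ⟨by norm_num⟩
  refine ⟨fun x y => ζ ^ (s3fun x y).val, fun x y z => ?_⟩
  dsimp only
  rw [nu_eq zmod3_two_ne hζ hlam j x y z]
  unfold omegaStd
  have key := p3_key x y z
  generalize hE : (x.val + y.val) / 3 = E
  rw [hE] at key
  rw [mul_pow, ← pow_mul, ← pow_mul,
    show j * z.val * E = j * (z.val * E) from mul_assoc _ _ _,
    units_rearrange, pow2, pow4]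
  apply zeta_zpow_congr hζ
  push_cast
  simp only [zmod_cast_val]
  unfold Fz
  unfold F3 at key
  rw [hj, inv2_3]
  linear_combination key

end Aux4



/-- Let `ζ` be a primitive `p`-th root of unity, `λ` a `p`-th root of unity, and for
`1 ≤ j ≤ p−1` let `ν_j` be the pullback of `ω_{ζ,λ}` along `n ↦ (b^j x)^n̄`.  If `p > 3`,
then `ν_j` is a coboundary iff `λ = 1`.  If `p = 3`, then `ν_j` is cohomologous to
`ω_{ζ^{j²}·λ^j}`; in particular, for `p = 3`: if `λ = 1` then `ν_j` is not a coboundary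
for `j ∈ {1,2}`, while if `λ ≠ 1` then there is exactly one `j ∈ {1,2}` for which `ν_j`
is a coboundary. -/
theorem statement10 {k : Type*} [Field k] [IsAlgClosed k] [CharZero k]
    (p : ℕ) (hp : p.Prime) (hodd : Odd p)
    (ζ lam : kˣ) (hζ : IsPrimitiveRoot ζ p) (hlam : lam ^ p = 1) :
    (p > 3 → ∀ j : ℕ, 1 ≤ j → j ≤ p - 1 →
      (IsAddCoboundary3 (nuZL p ζ lam j) ↔ lam = 1)) ∧
    (p = 3 →
      (∀ j : ℕ, 1 ≤ j → j ≤ 2 →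
        AddCohomologous3 (nuZL p ζ lam j) (omegaStd p (ζ ^ j ^ 2 * lam ^ j))) ∧
      (lam = 1 → ∀ j : ℕ, 1 ≤ j → j ≤ 2 → ¬ IsAddCoboundary3 (nuZL p ζ lam j)) ∧
      (lam ≠ 1 → ∃! j : ℕ, (1 ≤ j ∧ j ≤ 2) ∧ IsAddCoboundary3 (nuZL p ζ lam j))) := by
  haveI hfact : Fact p.Prime := ⟨hp⟩
  have hpne2 : p ≠ 2 := by
    rintro rfl
    obtain ⟨c, hc⟩ := hodd
    omega
  have h2 : (2 : ZMod p) ≠ 0 := by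
    simpa using cast_prime_ne_zero Nat.prime_two hpne2
  constructor
  · -- p > 3
    intro hgt j hj1 hjp
    have h3 : (3 : ZMod p) ≠ 0 := by
      simpa using cast_prime_ne_zero Nat.prime_three (by omega)
    constructor
    · intro hcob
      have hI := prod_inv_eq_one hcob (1 : ZMod p)
      rw [nu_prod h2 hζ hlam j, sum_sq_eq_zero hgt, mul_zero, ZMod.val_zero, pow_zero,
        one_mul] at hI
      have hd : orderOf lam ∣ Nat.gcd j p :=
        Nat.dvd_gcd (orderOf_dvd_of_pow_eq_one hI) (orderOf_dvd_of_pow_eq_one hlam)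
      have hnd : ¬ p ∣ j := by
        intro hdj
        have := Nat.le_of_dvd (by omega) hdj
        omega
      have hg : Nat.gcd j p = 1 := by
        rw [Nat.gcd_comm]
        exact (Nat.Prime.coprime_iff_not_dvd hp).mpr hnd
      rw [hg, Nat.dvd_one, orderOf_eq_one_iff] at hd
      exact hd
    · rintro rfl
      refine ⟨fun x y => ζ ^ ((-(j : ZMod p) ^ 2 * (2 : ZMod p)⁻¹
        * ((2 : ZMod p)⁻¹ * x ^ 2 * y ^ 2 + 2 * (3 : ZMod p)⁻¹ * x * y ^ 3 + x ^ 2 * y)).val),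
        fun x y z => ?_⟩
      dsimp only
      rw [nu_eq h2 hζ (one_pow p) j x y z, one_pow, mul_one, pow4, ← zpow_natCast ζ]
      apply zeta_zpow_congr hζ
      push_cast
      simp only [zmod_cast_val]
      have hu : (2 : ZMod p) * (2 : ZMod p)⁻¹ = 1 := mul_inv_cancel₀ h2
      have hv : (3 : ZMod p) * (3 : ZMod p)⁻¹ = 1 := mul_inv_cancel₀ h3
      unfold Fz
      linear_combination ((j : ZMod p) ^ 2 * ((2 : ZMod p)⁻¹ * x ^ 2 * y * z
          - (2 : ZMod p)⁻¹ * x * y * z ^ 2 + 3 * (3 : ZMod p)⁻¹ * x * y ^ 2 * z)) * hu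
        + ((j : ZMod p) ^ 2 * (2 * (2 : ZMod p)⁻¹ * x * y * z ^ 2 + x * y ^ 2 * z)) * hv
  · -- p = 3
    intro hp3
    subst hp3
    refine ⟨fun j hj1 hjp => p3_cohom hζ hlam j (zmod3_sq j hj1 hjp), ?_, ?_⟩
    · rintro rfl j hj1 hjp hcob
      have hI := prod_inv_eq_one hcob (1 : ZMod 3)
      rw [nu_prod zmod3_two_ne hζ hlam j, one_pow, mul_one, zmod3_sq j hj1 hjp,
        zmod3_val_aux, pow_one] at hI
      exact hζ.ne_one (by norm_num) hI
    · intro hlne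
      have hζk : IsPrimitiveRoot ((ζ : kˣ) : k) 3 := IsPrimitiveRoot.coe_units_iff.mpr hζ
      have hlamk : ((lam : kˣ) : k) ^ 3 = 1 := by
        rw [← Units.val_pow_eq_pow_val, hlam, Units.val_one]
      obtain ⟨a, ha3, hae⟩ := hζk.eq_pow_of_pow_eq_one hlamk
      have hae' : ζ ^ a = lam := Units.ext (by push_cast; exact hae)
      have ha0 : 1 ≤ a := by
        rcases Nat.eq_zero_or_pos a with h | h
        · subst h
          exact absurd (by simpa using hae'.symm) hlne
        · exact h
      have ha2 : a ≤ 2 := by omega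
      have huniq : ∀ j' : ℕ, (1 ≤ j' ∧ j' ≤ 2) ∧ IsAddCoboundary3 (nuZL 3 ζ lam j') →
          (3 : ℕ) ∣ a * j' + 1 := by
        rintro j' ⟨⟨hj'1, hj'2⟩, hcob⟩
        have hI := prod_inv_eq_one hcob (1 : ZMod 3)
        rw [nu_prod zmod3_two_ne hζ hlam j', zmod3_sq j' hj'1 hj'2, zmod3_val_aux,
          pow_one, ← hae', ← pow_mul, ← pow_succ'] at hI
        exact (hζ.pow_eq_one_iff_dvd _).mp hI
      have hexist : ∀ j' : ℕ, 1 ≤ j' → j' ≤ 2 → (3 : ℕ) ∣ a * j' + 1 →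
          IsAddCoboundary3 (nuZL 3 ζ lam j') := by
        intro j' hj'1 hj'2 hdvd
        apply cob_of_cohom (p3_cohom hζ hlam j' (zmod3_sq j' hj'1 hj'2))
        have hθ : ζ ^ j' ^ 2 * lam ^ j' = 1 := by
          rw [← hae', ← pow_mul, ← pow_add]
          rw [hζ.pow_eq_one_iff_dvd]
          interval_cases j' <;> interval_cases a <;> omega
        rw [hθ]
        exact omegaStd_one_cob 3
      interval_cases a
      · -- a = 1 : unique j = 2
        refine ⟨2, ⟨⟨by norm_num, le_refl 2⟩, hexist 2 (by norm_num) (le_refl 2)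
          (by norm_num)⟩, ?_⟩
        intro j' hj'
        have := huniq j' hj'
        obtain ⟨⟨hj'1, hj'2⟩, _⟩ := hj'
        interval_cases j' <;> omega
      · -- a = 2 : unique j = 1
        refine ⟨1, ⟨⟨le_refl 1, by norm_num⟩, hexist 1 (le_refl 1) (by norm_num)
          (by norm_num)⟩, ?_⟩
        intro j' hj'
        have := huniq j' hj'
        obtain ⟨⟨hj'1, hj'2⟩, _⟩ := hj'
        interval_cases j' <;> omega
end

section
/- Let p and q be distinct primes with q ≡ 1 (mod p), let m be an element of multiplicative order p in (Z/q)ˣ, and let λ be an integer with λ ≢ −1 (mod p). Let G = Z/p ⋉ (Z/q × Z/q) be the semidirect product in which the generator g of Z/p acts on Z/q × Z/q by g·(i,j) = (m·i, m^λ·j). Then H²(G, kˣ) = 0; that is, every 2-cocycle on G with values in kˣ is a coboundary. -/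
/-- A 2-cocycle on a group `G` with values in `kˣ` (trivial action). -/
def IsCocycle2 {k : Type*} [Field k] {G : Type*} [Group G] (β : G → G → kˣ) : Prop :=
  ∀ x y z : G, β y z * β x (y * z) = β (x * y) z * β x y

/-- A 2-coboundary on a group `G` with values in `kˣ`. -/
def IsCoboundary2 {k : Type*} [Field k] {G : Type*} [Group G] (β : G → G → kˣ) : Prop :=
  ∃ f : G → kˣ, ∀ x y : G, β x y = f x * f y * (f (x * y))⁻¹

/-!
Let `E` be the central extension `kˣ → E → G` built from `β`; `β` is a coboundary once `E → G`
has a homomorphic section, and for that it suffices to lift the generators `a = (1,0)`,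
`b = (0,1)`, `g` of `G` to elements of `E` satisfying the defining relations of `G`.
Since `kˣ` is divisible, `g` lifts to `g'` with `g' ^ p = 1` and `a` to some `a₁` with
`a₁ ^ q = 1`; then `g' a₁ g'⁻¹ = z a₁ ^ m` with `z` central and `z ^ q = 1`. If `m ≢ 1 (mod q)`,
replacing `a₁` by `z ^ n a₁` with `n (m - 1) ≡ 1` removes `z`; if `m ≡ 1`, conjugating `p` times
gives `z ^ p = 1`, so `z = 1`. The same works for `b` and the exponent `m ^ λ`. Finally the
commutator `z` of the lifts of `a` and `b` is central of order dividing `q`, and conjugation by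
`g'` shows `z ^ (m · m ^ λ) = z`; as `m ^ (1 + λ) ≠ 1` because `λ ≢ -1 (mod p)`, `z = 1`.
-/

open Multiplicative

section CentralElements

variable {E : Type*} [Group E]

lemma pow_mul_pow_eq_of_mul_eq_mul_mul {a b z : E} (hz : z ∈ Subgroup.center E)
    (h : a * b = z * (b * a)) (i j : ℕ) :
    a ^ i * b ^ j = z ^ (i * j) * (b ^ j * a ^ i) := by
  have hconj : ∀ i : ℕ, a ^ i * b * (a ^ i)⁻¹ = z ^ i * b := by
    intro i
    induction i with
    | zero => simp
    | succ i ih =>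
      calc a ^ (i + 1) * b * (a ^ (i + 1))⁻¹ = a * (a ^ i * b * (a ^ i)⁻¹) * a⁻¹ := by group
        _ = z ^ i * (a * b * a⁻¹) := by
          rw [ih, ← mul_assoc a, Subgroup.mem_center_iff.mp (Subgroup.pow_mem _ hz i) a]; group
        _ = z ^ (i + 1) * b := by rw [h]; group
  have hzb : Commute (z ^ i) b := (Subgroup.mem_center_iff.mp (Subgroup.pow_mem _ hz i) b).symm
  calc a ^ i * b ^ j = (a ^ i * b * (a ^ i)⁻¹) ^ j * a ^ i := by rw [conj_pow]; group
    _ = z ^ (i * j) * (b ^ j * a ^ i) := by rw [hconj, hzb.mul_pow, ← pow_mul, mul_assoc]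

lemma eq_one_of_pow_eq_self {M : Type*} [Monoid M] {z : M} {q n : ℕ} (hq : q.Prime)
    (hzq : z ^ q = 1) (hzn : z ^ n = z) (hn : (n : ZMod q) ≠ 1) : z = 1 := by
  rcases hq.eq_one_or_self_of_dvd _ (orderOf_dvd_of_pow_eq_one hzq) with h | h
  · exact orderOf_eq_one_iff.mp h
  · refine absurd ?_ hn
    have hfin : IsOfFinOrder z := isOfFinOrder_iff_pow_eq_one.mpr ⟨q, hq.pos, hzq⟩
    rw [← Nat.cast_one, ZMod.natCast_eq_natCast_iff, ← h, ← hfin.pow_eq_pow_iff_modEq, pow_one,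
      hzn]

lemma exists_conj_eq_pow_of_conj_eq_mul_pow {g x z : E} (hz : z ∈ Subgroup.center E)
    {p q r : ℕ} (hq : q.Prime) (hpq : p.Coprime q) (hg : g ^ p = 1) (hx : x ^ q = 1)
    (h : g * x * g⁻¹ = z * x ^ r) :
    ∃ n : ℕ, (z ^ n * x) ^ q = 1 ∧ g * (z ^ n * x) * g⁻¹ = (z ^ n * x) ^ r := by
  have hzc : ∀ y, Commute z y := fun y ↦ (Subgroup.mem_center_iff.mp hz y).symm
  have hzq : z ^ q = 1 := by
    have h1 : (g * x * g⁻¹) ^ q = 1 := by rw [conj_pow, hx, mul_one, mul_inv_cancel]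
    rwa [h, (hzc _).mul_pow, ← pow_mul, mul_comm r q, pow_mul, hx, one_pow, mul_one] at h1
  by_cases hr : (r : ZMod q) = 1
  · -- iterating the relation `p` times gives `z ^ p = 1`
    refine ⟨0, by simpa using hx, ?_⟩
    have hxr : x ^ r = x := by
      rw [← Nat.cast_one, ZMod.natCast_eq_natCast_iff] at hr
      rw [pow_eq_pow_of_modEq hr hx, pow_one]
    have hzp : z ^ p = 1 := by
      rw [hxr] at h
      have := pow_mul_pow_eq_of_mul_eq_mul_mul hz (a := g) (b := x)
        (by rw [← mul_assoc, ← h]; group) p 1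
      rw [hg, one_mul, pow_one, mul_one, mul_one] at this
      exact mul_eq_right.mp this.symm
    rw [(pow_eq_one_iff_of_coprime hpq).mp ⟨hzp, hzq⟩] at h
    simpa [hxr] using h
  · -- otherwise twist by `z ^ n` with `n (r - 1) = 1` in `ZMod q`
    have : Fact q.Prime := ⟨hq⟩
    set n := (((r : ZMod q) - 1)⁻¹).val
    have hn : ((n * r : ℕ) : ZMod q) = ((n + 1 : ℕ) : ZMod q) := by
      have : (r : ZMod q) - 1 ≠ 0 := sub_ne_zero.mpr hr
      push_cast
      simp only [n, ZMod.natCast_val, ZMod.cast_id', id]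
      field_simp
      ring
    refine ⟨n, ?_, ?_⟩
    · rw [((hzc x).pow_left n).mul_pow, ← pow_mul, pow_mul', hzq, one_pow, one_mul, hx]
    · rw [((hzc x).pow_left n).mul_pow, ← pow_mul,
        pow_eq_pow_of_modEq ((ZMod.natCast_eq_natCast_iff _ _ _).mp hn) hzq]
      calc g * (z ^ n * x) * g⁻¹ = z ^ n * (g * x * g⁻¹) := by
            rw [← mul_assoc g, ← ((hzc g).pow_left n).eq]; group
        _ = z ^ (n + 1) * x ^ r := by rw [h, pow_succ, mul_assoc]

lemma commute_of_conj_eq_pow {g a b z : E} (hz : z ∈ Subgroup.center E) {q m r : ℕ}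
    (hq : q.Prime) (hb : b ^ q = 1) (hga : g * a * g⁻¹ = a ^ m) (hgb : g * b * g⁻¹ = b ^ r)
    (hmr : ((m * r : ℕ) : ZMod q) ≠ 1) (h : a * b = z * (b * a)) : Commute a b := by
  have hzq : z ^ q = 1 := by
    simpa [hb] using pow_mul_pow_eq_of_mul_eq_mul_mul hz h 1 q
  have hzmr : z ^ (m * r) = z := by
    have hconj : a ^ m * b ^ r = z * (b ^ r * a ^ m) := by
      rw [← hga, ← hgb]
      calc g * a * g⁻¹ * (g * b * g⁻¹) = g * (z * (b * a)) * g⁻¹ := by rw [← h]; group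
        _ = z * (g * b * g⁻¹ * (g * a * g⁻¹)) := by
          rw [← mul_assoc g, Subgroup.mem_center_iff.mp hz g]; group
    have := pow_mul_pow_eq_of_mul_eq_mul_mul hz h m r
    rw [hconj] at this
    exact (mul_right_cancel this).symm
  have := eq_one_of_pow_eq_self hq hzq hzmr hmr
  rwa [this, one_mul] at h

end CentralElements

section ZModPowers

variable {M : Type*} [Monoid M] {n : ℕ}

lemma pow_val_one_of_pow_eq_one {x : M} (hx : x ^ n = 1) : x ^ (1 : ZMod n).val = x := by
  rw [← Nat.cast_one, ZMod.val_natCast, pow_eq_pow_of_modEq (Nat.mod_modEq 1 n) hx, pow_one]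

variable [NeZero n]

def zmodPowersHom {x : M} (hx : x ^ n = 1) : Multiplicative (ZMod n) →* M where
  toFun v := x ^ v.toAdd.val
  map_one' := by simp
  map_mul' u v := by
    rw [toAdd_mul, ZMod.val_add, ← pow_add]
    exact pow_eq_pow_of_modEq (Nat.mod_modEq _ _) hx

lemma zmodPowersHom_apply {x : M} (hx : x ^ n = 1) (v : Multiplicative (ZMod n)) :
    zmodPowersHom hx v = x ^ v.toAdd.val := rfl

lemma ofAdd_eq_pow_val (v : ZMod n) : ofAdd v = ofAdd (1 : ZMod n) ^ v.val := by
  rw [← ofAdd_nsmul, nsmul_one, ZMod.natCast_zmod_val]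

lemma MonoidHom.ext_mzmod {f g : Multiplicative (ZMod n) →* M}
    (h : f (ofAdd 1) = g (ofAdd 1)) : f = g := by
  refine MonoidHom.ext fun v ↦ ?_
  rw [← ofAdd_toAdd v, ofAdd_eq_pow_val, map_pow, map_pow, h]

variable {n' : ℕ} [NeZero n']

lemma ofAdd_prod_eq (v : ZMod n × ZMod n') :
    ofAdd v = ofAdd ((1 : ZMod n), (0 : ZMod n')) ^ v.1.val
      * ofAdd ((0 : ZMod n), (1 : ZMod n')) ^ v.2.val := by
  simp only [← ofAdd_nsmul, ← ofAdd_add, Prod.smul_mk, nsmul_one, nsmul_zero, Prod.mk_add_mk,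
    add_zero, zero_add, ZMod.natCast_zmod_val]

lemma MonoidHom.ext_mzmod_prod {f g : Multiplicative (ZMod n × ZMod n') →* M}
    (h₁ : f (ofAdd (1, 0)) = g (ofAdd (1, 0))) (h₂ : f (ofAdd (0, 1)) = g (ofAdd (0, 1))) :
    f = g := by
  refine MonoidHom.ext fun v ↦ ?_
  rw [← ofAdd_toAdd v, ofAdd_prod_eq, map_mul, map_mul, map_pow, map_pow, map_pow, map_pow, h₁,
    h₂]

end ZModPowers

section Cocycle

variable {k : Type*} [Field k] {G : Type*} [Group G] {β : G → G → kˣ}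

lemma IsCocycle2.one_left (hβ : IsCocycle2 β) (x : G) : β 1 x = β 1 1 := by
  simpa using hβ 1 1 x

lemma IsCocycle2.one_right (hβ : IsCocycle2 β) (x : G) : β x 1 = β 1 1 := by
  simpa using (hβ x 1 1).symm

@[ext]
structure CocycleExt (β : G → G → kˣ) where
  scalar : kˣ
  base : G

namespace CocycleExt

variable [hβ : Fact (IsCocycle2 β)]

instance : Group (CocycleExt β) where
  mul e f := ⟨e.scalar * f.scalar * β e.base f.base, e.base * f.base⟩
  one := ⟨(β 1 1)⁻¹, 1⟩
  inv e := ⟨(e.scalar * β e.base⁻¹ e.base * β 1 1)⁻¹, e.base⁻¹⟩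
  mul_assoc e f g := by
    refine CocycleExt.ext ?_ (mul_assoc _ _ _)
    show e.scalar * f.scalar * β e.base f.base * g.scalar * β (e.base * f.base) g.base
      = e.scalar * (f.scalar * g.scalar * β f.base g.base) * β e.base (f.base * g.base)
    calc _ = e.scalar * f.scalar * g.scalar * (β (e.base * f.base) g.base * β e.base f.base) := by
          ac_rfl
      _ = _ := by rw [← hβ.out]; ac_rfl
  one_mul e := by
    refine CocycleExt.ext ?_ (one_mul _)
    show (β 1 1)⁻¹ * e.scalar * β 1 e.base = e.scalar
    rw [hβ.out.one_left e.base, inv_mul_cancel_comm]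
  mul_one e := by
    refine CocycleExt.ext ?_ (mul_one _)
    show e.scalar * (β 1 1)⁻¹ * β e.base 1 = e.scalar
    rw [hβ.out.one_right e.base, inv_mul_cancel_right]
  inv_mul_cancel e := by
    refine CocycleExt.ext ?_ (inv_mul_cancel _)
    show (e.scalar * β e.base⁻¹ e.base * β 1 1)⁻¹ * e.scalar * β e.base⁻¹ e.base = (β 1 1)⁻¹
    group

def π : CocycleExt β →* G where
  toFun := base
  map_one' := rfl
  map_mul' _ _ := rfl

def ι : kˣ →* CocycleExt β where
  toFun u := ⟨u * (β 1 1)⁻¹, 1⟩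
  map_one' := by rw [one_mul]; rfl
  map_mul' u v := by
    refine CocycleExt.ext ?_ (one_mul _).symm
    show u * v * (β 1 1)⁻¹ = u * (β 1 1)⁻¹ * (v * (β 1 1)⁻¹) * β 1 1
    rw [← mul_assoc, inv_mul_cancel_right, mul_right_comm]

lemma π_ι (u : kˣ) : π (ι u : CocycleExt β) = 1 := rfl

lemma ι_mem_center (u : kˣ) : (ι u : CocycleExt β) ∈ Subgroup.center (CocycleExt β) := by
  refine Subgroup.mem_center_iff.mpr fun e ↦ CocycleExt.ext ?_ ((mul_one _).trans (one_mul _).symm)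
  show e.scalar * (u * (β 1 1)⁻¹) * β e.base 1 = u * (β 1 1)⁻¹ * e.scalar * β 1 e.base
  rw [hβ.out.one_left e.base, hβ.out.one_right e.base]
  ac_rfl

lemma exists_ι_mul_of_π_eq {e f : CocycleExt β} (h : π e = π f) : ∃ u : kˣ, e = ι u * f := by
  refine ⟨(e * f⁻¹).scalar * β 1 1, ?_⟩
  have hι : ι ((e * f⁻¹).scalar * β 1 1) = e * f⁻¹ := by
    refine CocycleExt.ext (mul_inv_cancel_right _ _) ?_
    show 1 = e.base * f.base⁻¹
    rw [show e.base = f.base from h, mul_inv_cancel]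
  rw [hι, inv_mul_cancel_right]

lemma exists_lift_pow_eq_one [IsAlgClosed k] {x : G} {n : ℕ} (hn : 0 < n) (hx : x ^ n = 1) :
    ∃ e : CocycleExt β, π e = x ∧ e ^ n = 1 := by
  let e₀ : CocycleExt β := ⟨1, x⟩
  obtain ⟨u, hu⟩ := exists_ι_mul_of_π_eq (e := e₀ ^ n) (f := 1) (by rw [map_pow, map_one]; exact hx)
  obtain ⟨t, ht⟩ := IsAlgClosed.exists_pow_nat_eq ((u⁻¹ : kˣ) : k) hn
  have ht0 : t ≠ 0 := by
    rintro rfl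
    rw [zero_pow hn.ne'] at ht
    exact (u⁻¹).ne_zero ht.symm
  refine ⟨ι (Units.mk0 t ht0) * e₀, by rw [map_mul, π_ι, one_mul]; rfl, ?_⟩
  have htn : Units.mk0 t ht0 ^ n = u⁻¹ := Units.ext (by simpa using ht)
  have hc : Commute (ι (Units.mk0 t ht0)) e₀ :=
    (Subgroup.mem_center_iff.mp (ι_mem_center _) e₀).symm
  rw [hc.mul_pow, ← map_pow, htn, hu, mul_one, ← map_mul, inv_mul_cancel, map_one]

lemma isCoboundary2_of_π_comp_eq_id (s : G →* CocycleExt β) (hs : π.comp s = MonoidHom.id G) :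
    IsCoboundary2 β := by
  refine ⟨fun x ↦ (s x).scalar⁻¹, fun x y ↦ ?_⟩
  have hbase : ∀ x, (s x).base = x := fun x ↦ DFunLike.congr_fun hs x
  have hmul : (s (x * y)).scalar = (s x).scalar * (s y).scalar * β x y := by
    rw [map_mul]
    show (s x).scalar * (s y).scalar * β (s x).base (s y).base = _
    rw [hbase, hbase]
  show β x y = (s x).scalar⁻¹ * (s y).scalar⁻¹ * ((s (x * y)).scalar⁻¹)⁻¹
  rw [inv_inv, hmul, ← mul_inv_rev, mul_comm (s y).scalar, inv_mul_cancel_left]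

lemma exists_lift_conj_eq_pow [IsAlgClosed k] {g x : G} {p q r : ℕ} (hq : q.Prime)
    (hpq : p.Coprime q) (hx : x ^ q = 1) (hgx : g * x * g⁻¹ = x ^ r) {g' : CocycleExt β}
    (hg' : π g' = g) (hg'p : g' ^ p = 1) :
    ∃ x' : CocycleExt β, π x' = x ∧ x' ^ q = 1 ∧ g' * x' * g'⁻¹ = x' ^ r := by
  obtain ⟨x₁, hx₁, hx₁q⟩ := exists_lift_pow_eq_one (β := β) hq.pos hx
  obtain ⟨u, hu⟩ := exists_ι_mul_of_π_eq (e := g' * x₁ * g'⁻¹) (f := x₁ ^ r)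
    (by rw [map_mul, map_mul, map_inv, map_pow, hg', hx₁, hgx])
  obtain ⟨n, hnq, hnr⟩ :=
    exists_conj_eq_pow_of_conj_eq_mul_pow (ι_mem_center u) hq hpq hg'p hx₁q hu
  exact ⟨ι u ^ n * x₁, by rw [map_mul, map_pow, π_ι, one_pow, one_mul, hx₁], hnq, hnr⟩

lemma commute_of_commute_π {g' a b : CocycleExt β} {q m r : ℕ} (hq : q.Prime)
    (hb : b ^ q = 1) (hga : g' * a * g'⁻¹ = a ^ m) (hgb : g' * b * g'⁻¹ = b ^ r)
    (hmr : ((m * r : ℕ) : ZMod q) ≠ 1) (hab : Commute (π a) (π b)) : Commute a b := by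
  obtain ⟨u, hu⟩ := exists_ι_mul_of_π_eq (e := a * b) (f := b * a)
    (by rw [map_mul, map_mul, hab.eq])
  exact commute_of_conj_eq_pow (ι_mem_center u) hq hb hga hgb hmr hu

end CocycleExt

end Cocycle

section Semidirect

open SemidirectProduct

variable {p q : ℕ} {φ : Multiplicative (ZMod p) →* MulAut (Multiplicative (ZMod q × ZMod q))}

lemma inl_ofAdd_pow_eq_one (v : ZMod q × ZMod q) :
    (inl (ofAdd v) : Multiplicative (ZMod q × ZMod q) ⋊[φ] Multiplicative (ZMod p)) ^ q = 1 := by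
  rw [← map_pow, ← ofAdd_nsmul, show q • v = 0 from Prod.ext (by simp) (by simp), ofAdd_zero,
    map_one]

lemma inr_ofAdd_pow_eq_one (c : ZMod p) :
    (inr (ofAdd c) : Multiplicative (ZMod q × ZMod q) ⋊[φ] Multiplicative (ZMod p)) ^ p = 1 := by
  rw [← map_pow, ← ofAdd_nsmul, nsmul_eq_mul, ZMod.natCast_self, zero_mul, ofAdd_zero, map_one]

variable [NeZero p] [NeZero q]

lemma SemidirectProduct.hom_ext_of_generators {H : Type*} [Group H]
    {f f' : Multiplicative (ZMod q × ZMod q) ⋊[φ] Multiplicative (ZMod p) →* H}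
    (ha : f (inl (ofAdd (1, 0))) = f' (inl (ofAdd (1, 0))))
    (hb : f (inl (ofAdd (0, 1))) = f' (inl (ofAdd (0, 1))))
    (hg : f (inr (ofAdd 1)) = f' (inr (ofAdd 1))) : f = f' :=
  hom_ext (MonoidHom.ext_mzmod_prod ha hb) (MonoidHom.ext_mzmod hg)

variable {μ ρ : ZMod q}
  (hφ : ∀ v : ZMod q × ZMod q, φ (ofAdd 1) (ofAdd v) = ofAdd (μ * v.1, ρ * v.2))
include hφ

lemma exists_hom_eq_of_relations {E : Type*} [Group E] {a b g : E}
    (ha : a ^ q = 1) (hb : b ^ q = 1) (hg : g ^ p = 1) (hab : Commute a b)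
    (hga : g * a * g⁻¹ = a ^ μ.val) (hgb : g * b * g⁻¹ = b ^ ρ.val) :
    ∃ s : Multiplicative (ZMod q × ZMod q) ⋊[φ] Multiplicative (ZMod p) →* E,
      s (inl (ofAdd (1, 0))) = a ∧ s (inl (ofAdd (0, 1))) = b ∧ s (inr (ofAdd 1)) = g := by
  set fN : Multiplicative (ZMod q × ZMod q) →* E :=
    ((zmodPowersHom ha).noncommCoprod (zmodPowersHom hb)
      fun _ _ ↦ hab.pow_pow _ _).comp
      (MulEquiv.prodMultiplicative (ZMod q) (ZMod q)).toMonoidHom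
  have hfN : ∀ v, fN (ofAdd v) = a ^ v.1.val * b ^ v.2.val := fun _ ↦ rfl
  have hgen : fN.comp (φ (ofAdd 1)).toMonoidHom = (MulAut.conj g).toMonoidHom.comp fN := by
    refine MonoidHom.ext_mzmod_prod ?_ ?_ <;>
      simp [hφ, hfN, pow_val_one_of_pow_eq_one, ha, hb, hga, hgb]
  have hpow : ∀ (n : ℕ) v, fN ((φ (ofAdd 1) ^ n) v) = g ^ n * fN v * (g ^ n)⁻¹ := by
    intro n
    induction n with
    | zero => simp
    | succ n ih =>
      intro v
      rw [pow_succ, MulAut.mul_apply, ih]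
      have := DFunLike.congr_fun hgen v
      simp only [MonoidHom.comp_apply, MulEquiv.coe_toMonoidHom, MulAut.conj_apply] at this
      rw [this]
      group
  refine ⟨lift fN (zmodPowersHom hg) fun c ↦ MonoidHom.ext fun v ↦ ?_, ?_, ?_, ?_⟩
  · show fN (φ c v) = zmodPowersHom hg c * fN v * (zmodPowersHom hg c)⁻¹
    rw [zmodPowersHom_apply, ← hpow, ← map_pow, ← ofAdd_eq_pow_val, ofAdd_toAdd]
  · simp [hfN, pow_val_one_of_pow_eq_one ha]
  · simp [hfN, pow_val_one_of_pow_eq_one hb]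
  · simp [zmodPowersHom_apply, pow_val_one_of_pow_eq_one hg]

end Semidirect

lemma mul_zpow_ne_one {M : Type*} [Group M] {m : M} {n : ℕ} (hm : orderOf m = n) {lam : ℤ}
    (hlam : (lam : ZMod n) ≠ -1) : m * m ^ lam ≠ 1 := by
  intro h
  rw [← zpow_one_add, ← orderOf_dvd_iff_zpow_eq_one, hm, ← ZMod.intCast_zmod_eq_zero_iff_dvd] at h
  push_cast at h
  exact hlam (eq_neg_of_add_eq_zero_right h)

open SemidirectProduct in
lemma CocycleExt.exists_splitting_semidirect {k : Type*} [Field k] [IsAlgClosed k] {p q : ℕ}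
    (hp : p.Prime) (hq : q.Prime) (hpq : p ≠ q)
    {φ : Multiplicative (ZMod p) →* MulAut (Multiplicative (ZMod q × ZMod q))} {μ ρ : ZMod q}
    (hφ : ∀ v : ZMod q × ZMod q, φ (ofAdd 1) (ofAdd v) = ofAdd (μ * v.1, ρ * v.2))
    (hμρ : μ * ρ ≠ 1)
    {β : Multiplicative (ZMod q × ZMod q) ⋊[φ] Multiplicative (ZMod p) →
      Multiplicative (ZMod q × ZMod q) ⋊[φ] Multiplicative (ZMod p) → kˣ}
    [Fact (IsCocycle2 β)] :
    ∃ s : Multiplicative (ZMod q × ZMod q) ⋊[φ] Multiplicative (ZMod p) →* CocycleExt β,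
      π.comp s = MonoidHom.id _ := by
  have : NeZero p := ⟨hp.ne_zero⟩
  have : NeZero q := ⟨hq.ne_zero⟩
  have hcop : p.Coprime q := (Nat.coprime_primes hp hq).mpr hpq
  have hconj : ∀ v, (inr (ofAdd 1) * inl (ofAdd v) * (inr (ofAdd 1))⁻¹
      : Multiplicative (ZMod q × ZMod q) ⋊[φ] Multiplicative (ZMod p))
      = inl (ofAdd (μ * v.1, ρ * v.2)) := by
    intro v
    rw [← map_inv, ← inl_aut, hφ]
  obtain ⟨g', hg', hg'p⟩ := exists_lift_pow_eq_one (β := β) hp.pos (inr_ofAdd_pow_eq_one 1)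
  obtain ⟨a', ha', ha'q, hga'⟩ := exists_lift_conj_eq_pow (r := μ.val) hq hcop
    (inl_ofAdd_pow_eq_one (1, 0)) (by rw [hconj, ← map_pow, ← ofAdd_nsmul]; simp) hg' hg'p
  obtain ⟨b', hb', hb'q, hgb'⟩ := exists_lift_conj_eq_pow (r := ρ.val) hq hcop
    (inl_ofAdd_pow_eq_one (0, 1)) (by rw [hconj, ← map_pow, ← ofAdd_nsmul]; simp) hg' hg'p
  have hab : Commute a' b' := commute_of_commute_π hq hb'q hga' hgb' (by simpa using hμρ)
    (by rw [ha', hb']; exact (Commute.all _ _).map inl)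
  obtain ⟨s, hsa, hsb, hsg⟩ := exists_hom_eq_of_relations hφ ha'q hb'q hg'p hab hga' hgb'
  exact ⟨s, hom_ext_of_generators (by simp [hsa, ha']) (by simp [hsb, hb']) (by simp [hsg, hg'])⟩

theorem statement11_general {k : Type*} [Field k] [IsAlgClosed k]
    (p q : ℕ) (hp : p.Prime) (hq : q.Prime) (hne : p ≠ q)
    (m : (ZMod q)ˣ) (hm : orderOf m = p)
    (lam : ℤ) (hlam : (lam : ZMod p) ≠ -1)
    (φ : Multiplicative (ZMod p) →* MulAut (Multiplicative (ZMod q × ZMod q)))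
    (hφ : ∀ v : ZMod q × ZMod q,
      φ (Multiplicative.ofAdd (1 : ZMod p)) (Multiplicative.ofAdd v)
        = Multiplicative.ofAdd ((m : ZMod q) * v.1, ((m ^ lam : (ZMod q)ˣ) : ZMod q) * v.2))
    (β : SemidirectProduct (Multiplicative (ZMod q × ZMod q)) (Multiplicative (ZMod p)) φ →
         SemidirectProduct (Multiplicative (ZMod q × ZMod q)) (Multiplicative (ZMod p)) φ → kˣ)
    (hβ : IsCocycle2 β) :
    IsCoboundary2 β := by
  have : Fact (IsCocycle2 β) := ⟨hβ⟩
  have hμρ : (m : ZMod q) * ((m ^ lam : (ZMod q)ˣ) : ZMod q) ≠ 1 := by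
    rw [← Units.val_mul, Ne, Units.val_eq_one]
    exact mul_zpow_ne_one hm hlam
  obtain ⟨s, hs⟩ := CocycleExt.exists_splitting_semidirect (β := β) hp hq hne hφ hμρ
  exact CocycleExt.isCoboundary2_of_π_comp_eq_id s hs

/-- Let `p, q` be distinct primes with `q ≡ 1 (mod p)`, `m` an element of multiplicative
order `p` in `(Z/q)ˣ`, and `λ` an integer with `λ ≢ −1 (mod p)`.  Let
`G = Z/p ⋉ (Z/q × Z/q)` be the semidirect product in which the generator `g` of `Z/p`
acts by `g·(i,j) = (m·i, m^λ·j)`.  Then `H²(G, kˣ) = 0`: every 2-cocycle on `G` with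
values in `kˣ` is a coboundary. -/
theorem statement11 {k : Type*} [Field k] [IsAlgClosed k] [CharZero k]
    (p q : ℕ) (hp : p.Prime) (hq : q.Prime) (hne : p ≠ q) (hmod : q % p = 1)
    (m : (ZMod q)ˣ) (hm : orderOf m = p)
    (lam : ℤ) (hlam : (lam : ZMod p) ≠ -1)
    (φ : Multiplicative (ZMod p) →* MulAut (Multiplicative (ZMod q × ZMod q)))
    (hφ : ∀ v : ZMod q × ZMod q,
      φ (Multiplicative.ofAdd (1 : ZMod p)) (Multiplicative.ofAdd v)
        = Multiplicative.ofAdd ((m : ZMod q) * v.1, ((m ^ lam : (ZMod q)ˣ) : ZMod q) * v.2))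
    (β : SemidirectProduct (Multiplicative (ZMod q × ZMod q)) (Multiplicative (ZMod p)) φ →
         SemidirectProduct (Multiplicative (ZMod q × ZMod q)) (Multiplicative (ZMod p)) φ → kˣ)
    (hβ : IsCocycle2 β) :
    IsCoboundary2 β :=
  statement11_general p q hp hq hne m hm lam hlam φ hφ β hβ
end

section
/- Let q be a prime. For each q-th root of unity ξ ∈ k, the map α_ξ : (Z/q × Z/q)² → kˣ defined by α_ξ((i,j),(i',j')) = ξ^{j̄·ī'} is a 2-cocycle on Z/q × Z/q with values in kˣ; moreover α_ξ and α_{ξ'} are cohomologous if and only if ξ = ξ', and every 2-cocycle on Z/q × Z/q with values in kˣ is cohomologous to α_ξ for some q-th root of unity ξ. Hence ξ ↦ [α_ξ] is a group isomorphism from the group of q-th roots of unity in k onto H²(Z/q × Z/q, kˣ). -/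
/-- A 2-cocycle on an additive group `A` with values in `kˣ` (trivial action). -/
def IsAddCocycle2 {k : Type*} [Field k] {A : Type*} [AddGroup A] (β : A → A → kˣ) : Prop :=
  ∀ x y z : A, β y z * β x (y + z) = β (x + y) z * β x y

/-- A 2-coboundary on an additive group `A` with values in `kˣ`. -/
def IsAddCoboundary2 {k : Type*} [Field k] {A : Type*} [AddGroup A] (β : A → A → kˣ) : Prop :=
  ∃ f : A → kˣ, ∀ x y : A, β x y = f x * f y * (f (x + y))⁻¹

/-- Two 2-cocycles are cohomologous if their pointwise quotient is a coboundary. -/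
def AddCohomologous2 {k : Type*} [Field k] {A : Type*} [AddGroup A]
    (β β' : A → A → kˣ) : Prop :=
  IsAddCoboundary2 (fun x y => β x y * (β' x y)⁻¹)

/-- The 2-cocycle `α_ξ((i,j),(i',j')) = ξ^{j̄·ī'}` on `Z/q × Z/q` associated to a
`q`-th root of unity `ξ`, bars denoting representatives in `{0,…,q−1}`. -/
def alphaXi {k : Type*} [Field k] (q : ℕ) (ξ : kˣ) :
    ZMod q × ZMod q → ZMod q × ZMod q → kˣ :=
  fun x y => ξ ^ (x.2.val * y.1.val)

/-!
A normalized cocycle `β` on `A = ℤ/q × ℤ/q` defines a central extension `kˣ → E → A`, namely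
`kˣ × A` with product `(a, x) (b, y) = (a b β(x, y), x + y)`. Since `k` is algebraically closed,
lifts `u`, `v` of the generators of `A` can be rescaled by central `q`-th roots so that
`u ^ q = v ^ q = 1`. Their commutator is central, so `v u = ξ u v` for a `q`-th root of unity `ξ`,
and the section `(i, j) ↦ u ^ ī v ^ j̄` multiplies according to `α_ξ`, which exhibits `β ~ α_ξ`.
Conversely, coboundaries on an abelian group are symmetric while `α_ξ` fails to be symmetric
exactly by `ξ`, which separates the classes.
-/

section Cohomology

variable {k A : Type*} [Field k] [AddGroup A]

theorem AddCohomologous2.refl (β : A → A → kˣ) : AddCohomologous2 β β :=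
  ⟨1, fun x y => by simp⟩

theorem AddCohomologous2.trans {β β' β'' : A → A → kˣ} (h : AddCohomologous2 β β')
    (h' : AddCohomologous2 β' β'') : AddCohomologous2 β β'' := by
  obtain ⟨f, hf⟩ := h
  obtain ⟨g, hg⟩ := h'
  beta_reduce at hf hg
  refine ⟨f * g, fun x y => ?_⟩
  calc β x y * (β'' x y)⁻¹ = (β x y * (β' x y)⁻¹) * (β' x y * (β'' x y)⁻¹) := by group
    _ = (f * g) x * (f * g) y * ((f * g) (x + y))⁻¹ := by
      rw [hf, hg]; simp only [Pi.mul_apply, mul_inv]; ac_rfl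

theorem isAddCoboundary2_const (c : kˣ) : IsAddCoboundary2 (fun _ _ : A => c) :=
  ⟨fun _ => c, fun _ _ => by group⟩

theorem IsAddCoboundary2.apply_comm {A : Type*} [AddCommGroup A] {β : A → A → kˣ}
    (h : IsAddCoboundary2 β) (x y : A) : β x y = β y x := by
  obtain ⟨f, hf⟩ := h
  rw [hf, hf, mul_comm (f x), add_comm]

end Cohomology

section Commutation

variable {G : Type*} [Group G] {u v z : G}

theorem mul_pow_eq_of_mul_eq (hzu : Commute z u) (h : v * u = z * (u * v)) (n : ℕ) :
    v * u ^ n = z ^ n * (u ^ n * v) := by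
  have hsc : SemiconjBy v u (z * u) := by rw [SemiconjBy, h, mul_assoc]
  rw [(hsc.pow_right n).eq, hzu.mul_pow, mul_assoc]

theorem pow_mul_pow_eq_of_mul_eq (hzu : Commute z u) (hzv : Commute z v)
    (h : v * u = z * (u * v)) (m n : ℕ) :
    v ^ m * u ^ n = z ^ (n * m) * (u ^ n * v ^ m) := by
  induction m with
  | zero => simp
  | succ m ih =>
    calc v ^ (m + 1) * u ^ n = v ^ m * (z ^ n * (u ^ n * v)) := by
          rw [pow_succ, mul_assoc, mul_pow_eq_of_mul_eq hzu h]
      _ = z ^ n * (v ^ m * u ^ n) * v := by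
          rw [← mul_assoc, ((hzv.pow_pow n m).eq).symm]; group
      _ = z ^ (n * (m + 1)) * (u ^ n * v ^ (m + 1)) := by
          rw [ih, mul_add, mul_one, pow_add]; group

end Commutation

theorem pow_eq_pow_of_natCast_eq {M : Type*} [Monoid M] {q : ℕ} {ξ : M} (hξ : ξ ^ q = 1)
    {a b : ℕ} (h : (a : ZMod q) = b) : ξ ^ a = ξ ^ b := by
  rw [pow_eq_pow_mod a hξ, pow_eq_pow_mod b hξ, (ZMod.natCast_eq_natCast_iff' a b q).mp h]

theorem pow_val_add {M : Type*} [Monoid M] {q : ℕ} [NeZero q] {u : M} (hu : u ^ q = 1)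
    (a b : ZMod q) : u ^ (a + b).val = u ^ a.val * u ^ b.val := by
  rw [← pow_add]
  exact pow_eq_pow_of_natCast_eq hu (by simp)

section AlphaXi

variable {k : Type*} [Field k] {q : ℕ}

theorem isAddCocycle2_alphaXi [NeZero q] {ξ : kˣ} (hξ : ξ ^ q = 1) :
    IsAddCocycle2 (alphaXi q ξ) := by
  intro x y z
  simp only [alphaXi, ← pow_add]
  exact pow_eq_pow_of_natCast_eq hξ
    (by push_cast [Prod.fst_add, Prod.snd_add, ZMod.natCast_zmod_val]; ring)

theorem alphaXi_cohomologous_iff [Fact (1 < q)] (ξ ξ' : kˣ) :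
    AddCohomologous2 (alphaXi q ξ) (alphaXi q ξ') ↔ ξ = ξ' := by
  refine ⟨fun h => ?_, fun h => h ▸ AddCohomologous2.refl _⟩
  simpa [alphaXi, ZMod.val_one, mul_inv_eq_one] using h.apply_comm (0, 1) (1, 0)

end AlphaXi

structure NormalizedAddCocycle2 (k A : Type*) [Field k] [AddGroup A] where
  toFun : A → A → kˣ
  isAddCocycle2 : IsAddCocycle2 toFun
  map_zero_zero : toFun 0 0 = 1

namespace NormalizedAddCocycle2

variable {k A : Type*} [Field k] [AddGroup A]

instance : CoeFun (NormalizedAddCocycle2 k A) (fun _ => A → A → kˣ) := ⟨toFun⟩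

variable (β : NormalizedAddCocycle2 k A)

theorem map_zero_left (y : A) : β 0 y = 1 := by
  have h := β.isAddCocycle2 0 0 y
  rw [zero_add, zero_add, β.map_zero_zero, mul_one] at h
  exact mul_eq_left.mp h

theorem map_zero_right (x : A) : β x 0 = 1 := by
  have h := β.isAddCocycle2 x 0 0
  rw [add_zero, add_zero, β.map_zero_zero, one_mul] at h
  exact mul_eq_left.mp h.symm

theorem map_neg_self (x : A) : β (-x) x = β x (-x) := by
  have h := β.isAddCocycle2 x (-x) x
  rwa [neg_add_cancel, add_neg_cancel, map_zero_left, map_zero_right, mul_one, one_mul] at h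

@[ext]
structure Extension (β : NormalizedAddCocycle2 k A) where
  coeff : kˣ
  base : A

instance : Group β.Extension where
  mul p r := ⟨p.coeff * r.coeff * β p.base r.base, p.base + r.base⟩
  one := ⟨1, 0⟩
  inv p := ⟨(p.coeff * β p.base (-p.base))⁻¹, -p.base⟩
  mul_assoc p r s := by
    refine Extension.ext ?_ (add_assoc _ _ _)
    show p.coeff * r.coeff * β p.base r.base * s.coeff * β (p.base + r.base) s.base =
        p.coeff * (r.coeff * s.coeff * β r.base s.base) * β p.base (r.base + s.base)
    calc _ = p.coeff * r.coeff * s.coeff * (β (p.base + r.base) s.base * β p.base r.base) := by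
          ac_rfl
      _ = _ := by rw [← β.isAddCocycle2]; ac_rfl
  one_mul p := by
    refine Extension.ext ?_ (zero_add _)
    show 1 * p.coeff * β 0 p.base = p.coeff
    rw [map_zero_left, one_mul, mul_one]
  mul_one p := by
    refine Extension.ext ?_ (add_zero _)
    show p.coeff * 1 * β p.base 0 = p.coeff
    rw [map_zero_right, mul_one, mul_one]
  inv_mul_cancel p := by
    refine Extension.ext ?_ (neg_add_cancel _)
    show (p.coeff * β p.base (-p.base))⁻¹ * p.coeff * β (-p.base) p.base = 1
    rw [map_neg_self]
    group

variable {β}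

@[simp] theorem mul_coeff (p r : β.Extension) :
    (p * r).coeff = p.coeff * r.coeff * β p.base r.base := rfl

@[simp] theorem mul_base (p r : β.Extension) : (p * r).base = p.base + r.base := rfl

@[simp] theorem one_base : (1 : β.Extension).base = 0 := rfl

@[simp] theorem inv_base (p : β.Extension) : p⁻¹.base = -p.base := rfl

@[simp] theorem pow_base (p : β.Extension) (n : ℕ) : (p ^ n).base = n • p.base := by
  induction n with
  | zero => simp
  | succ n ih => rw [pow_succ, mul_base, ih, succ_nsmul]

variable (β)

def central : kˣ →* β.Extension where
  toFun c := ⟨c, 0⟩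
  map_one' := rfl
  map_mul' c d := by
    refine Extension.ext ?_ (add_zero 0).symm
    show c * d = c * d * β 0 0
    rw [map_zero_left, mul_one]

variable {β}

@[simp] theorem central_coeff (c : kˣ) : (β.central c).coeff = c := rfl

@[simp] theorem central_base (c : kˣ) : (β.central c).base = 0 := rfl

theorem central_injective : Function.Injective β.central :=
  fun _ _ h => congrArg Extension.coeff h

theorem central_mul (c : kˣ) (p : β.Extension) : β.central c * p = ⟨c * p.coeff, p.base⟩ := by
  ext <;> simp [map_zero_left]

theorem commute_central (c : kˣ) (p : β.Extension) : Commute (β.central c) p := by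
  show _ = _
  ext <;> simp [map_zero_left, map_zero_right, mul_comm]

theorem eq_central_of_base_eq_zero {p : β.Extension} (h : p.base = 0) :
    p = β.central p.coeff := by
  ext <;> simp [h]

theorem exists_pow_eq_one [IsAlgClosed k] {q : ℕ} (hq : 0 < q) (p : β.Extension)
    (h : q • p.base = 0) : ∃ p' : β.Extension, p'.base = p.base ∧ p' ^ q = 1 := by
  obtain ⟨r, hr⟩ := IsAlgClosed.exists_pow_nat_eq ((p ^ q).coeff : k) hq
  have hr0 : r ≠ 0 := by
    rintro rfl
    exact (p ^ q).coeff.ne_zero (by rw [← hr, zero_pow hq.ne'])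
  refine ⟨β.central ((Units.mk0 r hr0)⁻¹) * p, by simp, ?_⟩
  have hpq : p ^ q = β.central (p ^ q).coeff := eq_central_of_base_eq_zero (by simpa using h)
  rw [(commute_central _ p).mul_pow, hpq, ← map_pow, ← map_mul, inv_pow,
    show Units.mk0 r hr0 ^ q = (p ^ q).coeff from Units.ext (by simpa using hr),
    inv_mul_cancel, map_one]

theorem cohomologous_of_section (γ : A → A → kˣ) (s : A → β.Extension)
    (hs : ∀ x, (s x).base = x) (hγ : ∀ x y, s x * s y = β.central (γ x y) * s (x + y)) :
    AddCohomologous2 β γ := by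
  refine ⟨fun x => (s x).coeff⁻¹, fun x y => ?_⟩
  have h := congrArg Extension.coeff (hγ x y)
  rw [mul_coeff, central_mul, hs, hs] at h
  simp only at h ⊢
  rw [mul_inv_eq_iff_eq_mul, eq_inv_mul_of_mul_eq h]
  simp only [mul_inv, inv_inv]
  ac_rfl

end NormalizedAddCocycle2

theorem IsAddCocycle2.exists_normalized {k A : Type*} [Field k] [AddGroup A]
    {β : A → A → kˣ} (hβ : IsAddCocycle2 β) :
    ∃ β' : NormalizedAddCocycle2 k A, AddCohomologous2 β β' := by
  refine ⟨⟨fun x y => β x y * (β 0 0)⁻¹, fun x y z => ?_, mul_inv_cancel _⟩, ?_⟩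
  · simp only [mul_mul_mul_comm _ (β 0 0)⁻¹, hβ x y z]
  · simpa [AddCohomologous2] using isAddCoboundary2_const (A := A) (β 0 0)

theorem NormalizedAddCocycle2.exists_cohomologous_alphaXi {k : Type*} [Field k] [IsAlgClosed k]
    {q : ℕ} [NeZero q] (β : NormalizedAddCocycle2 k (ZMod q × ZMod q)) :
    ∃ ξ : kˣ, ξ ^ q = 1 ∧ AddCohomologous2 β (alphaXi q ξ) := by
  obtain ⟨u, hu, huq⟩ := exists_pow_eq_one (β := β) (NeZero.pos q) ⟨1, (1, 0)⟩ (by simp)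
  obtain ⟨v, hv, hvq⟩ := exists_pow_eq_one (β := β) (NeZero.pos q) ⟨1, (0, 1)⟩ (by simp)
  set ξ := (v * u * (u * v)⁻¹).coeff
  have hvu : v * u = β.central ξ * (u * v) := by
    rw [← eq_central_of_base_eq_zero (by rw [mul_base, mul_base, inv_base, mul_base]; abel),
      inv_mul_cancel_right]
  have hcomm := pow_mul_pow_eq_of_mul_eq (commute_central ξ u) (commute_central ξ v) hvu
  have hξ : ξ ^ q = 1 := by
    have h := hcomm 1 q
    rw [huq, pow_one, mul_one, one_mul, mul_one, ← map_pow, eq_comm, mul_eq_right] at h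
    exact central_injective (h.trans (map_one _).symm)
  refine ⟨ξ, hξ, cohomologous_of_section (alphaXi q ξ) (fun x => u ^ x.1.val * v ^ x.2.val)
    (fun x => by simp [hu, hv]) (fun x y => ?_)⟩
  simp only [alphaXi, Prod.fst_add, Prod.snd_add, pow_val_add huq, pow_val_add hvq, map_pow]
  calc u ^ x.1.val * v ^ x.2.val * (u ^ y.1.val * v ^ y.2.val)
      = u ^ x.1.val * (v ^ x.2.val * u ^ y.1.val) * v ^ y.2.val := by simp only [mul_assoc]
    _ = u ^ x.1.val * (β.central ξ ^ (x.2.val * y.1.val) * (u ^ y.1.val * v ^ x.2.val))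
          * v ^ y.2.val := by rw [hcomm, mul_comm y.1.val]
    _ = _ := by
      rw [(((commute_central ξ _).pow_left _).symm.left_comm)]
      simp only [mul_assoc]

theorem statement12_general {k : Type*} [Field k] [IsAlgClosed k]
    (q : ℕ) (hq : q.Prime) :
    (∀ ξ : kˣ, ξ ^ q = 1 → IsAddCocycle2 (alphaXi q ξ)) ∧
    (∀ ξ ξ' : kˣ, ∀ x y : ZMod q × ZMod q,
      alphaXi q ξ x y * alphaXi q ξ' x y = alphaXi q (ξ * ξ') x y) ∧
    (∀ ξ ξ' : kˣ, ξ ^ q = 1 → ξ' ^ q = 1 →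
      (AddCohomologous2 (alphaXi q ξ) (alphaXi q ξ') ↔ ξ = ξ')) ∧
    (∀ β : ZMod q × ZMod q → ZMod q × ZMod q → kˣ, IsAddCocycle2 β →
      ∃ ξ : kˣ, ξ ^ q = 1 ∧ AddCohomologous2 β (alphaXi q ξ)) := by
  have : Fact (1 < q) := ⟨hq.one_lt⟩
  have : NeZero q := ⟨hq.ne_zero⟩
  refine ⟨fun ξ => isAddCocycle2_alphaXi, fun ξ ξ' x y => (mul_pow ξ ξ' _).symm,
    fun ξ ξ' _ _ => alphaXi_cohomologous_iff ξ ξ', fun β hβ => ?_⟩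
  obtain ⟨β', hβ'⟩ := hβ.exists_normalized
  obtain ⟨ξ, hξ, h⟩ := β'.exists_cohomologous_alphaXi
  exact ⟨ξ, hξ, hβ'.trans h⟩

/-- For each `q`-th root of unity `ξ`, the map `α_ξ` is a 2-cocycle on `Z/q × Z/q` with
values in `kˣ`; `α_ξ` and `α_{ξ'}` are cohomologous iff `ξ = ξ'`; and every 2-cocycle on
`Z/q × Z/q` with values in `kˣ` is cohomologous to some `α_ξ`.  Hence `ξ ↦ [α_ξ]` is a
group isomorphism from the `q`-th roots of unity in `k` onto `H²(Z/q × Z/q, kˣ)`. -/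
theorem statement12 {k : Type*} [Field k] [IsAlgClosed k] [CharZero k]
    (q : ℕ) (hq : q.Prime) :
    (∀ ξ : kˣ, ξ ^ q = 1 → IsAddCocycle2 (alphaXi q ξ)) ∧
    (∀ ξ ξ' : kˣ, ∀ x y : ZMod q × ZMod q,
      alphaXi q ξ x y * alphaXi q ξ' x y = alphaXi q (ξ * ξ') x y) ∧
    (∀ ξ ξ' : kˣ, ξ ^ q = 1 → ξ' ^ q = 1 →
      (AddCohomologous2 (alphaXi q ξ) (alphaXi q ξ') ↔ ξ = ξ')) ∧
    (∀ β : ZMod q × ZMod q → ZMod q × ZMod q → kˣ, IsAddCocycle2 β →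
      ∃ ξ : kˣ, ξ ^ q = 1 ∧ AddCohomologous2 β (alphaXi q ξ)) :=
  statement12_general q hq
end

section
/- Let p and q be primes with p ≡ 1 (mod q), and let t and h be elements of multiplicative order q in (Z/p)ˣ. Let Γ' be the group with presentation ⟨a, b : a^q = b^p = 1, a·b·a⁻¹ = b^t⟩ (so Γ' ≅ Z/p ⋊ Z/q has order pq), and let G' = Z/q ⋉ Γ' be the semidirect product in which the generator g of Z/q acts on Γ' by the automorphism determined by a ↦ a and b ↦ b^h; let F' = ⟨g⟩ ≤ G'. Then: (1) every subgroup of G' of order pq is normal in G'; and (2) the subgroups L ≤ G' of order pq satisfying L ∩ F' = 1 are precisely the subgroups L_k = ⟨b, g^k·a⟩ for k = 0, 1, …, q−1, and these q subgroups are pairwise distinct. -/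
/-!
`N = ⟨b⟩` is normal of order `p` and `G'/N` has order `q²`, so it is abelian. Since `p ∤ q²`,
`N` contains every element of order `p`, hence lies in every subgroup `L` of order `pq`; such an
`L` contains the commutator subgroup and is normal.

If moreover `L ∩ ⟨g⟩ = 1`, then `L` is a complement of `⟨g⟩`, so `a⁻¹ = l gⁿ` with `l ∈ L`, i.e.
`gⁿ a ∈ L`, and `L = ⟨b, gⁿ a⟩` by counting. Conversely, `G'/N` is not cyclic, so `ā ∉ ⟨ḡ⟩`; the
image of `⟨b, gᵏ a⟩` is the order-`q` group `⟨ḡᵏ ā⟩`, which meets `⟨ḡ⟩` trivially, and together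
with `N ∩ ⟨g⟩ = 1` this gives `⟨b, gᵏ a⟩ ∩ ⟨g⟩ = 1`, so `⟨b, gᵏ a⟩` is a proper subgroup of order
divisible by `pq`. Finally `gᵏ a (gᵏ' a)⁻¹ ∈ ⟨g⟩` separates the `L_k`.
-/

open Subgroup

namespace Subgroup

variable {G : Type*} [Group G]

theorem normal_zpowers_of_conj_mem [Finite G] {b : G} {S : Set G} (hS : closure S = ⊤)
    (hconj : ∀ x ∈ S, x * b * x⁻¹ ∈ zpowers b) : (zpowers b).Normal := by
  rw [← normalizer_eq_top_iff, eq_top_iff, ← hS, closure_le]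
  intro x hx
  refine mem_normalizer_fintype fun n hn => ?_
  obtain ⟨m, rfl⟩ := mem_zpowers_iff.mp hn
  rw [← conj_zpow]
  exact zpow_mem (hconj x hx) m

theorem le_of_card_prime_dvd_card [Finite G] {N H : Subgroup G} [N.Normal]
    (hN : (Nat.card N).Prime) (hcop : (Nat.card N).Coprime N.index)
    (hdvd : Nat.card N ∣ Nat.card H) : N ≤ H := by
  have := Fact.mk hN
  obtain ⟨x, hx⟩ := exists_prime_orderOf_dvd_card' (G := H) _ hdvd
  rw [← orderOf_submonoid] at hx
  have hxN : (x : G) ∈ N := by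
    rw [← QuotientGroup.eq_one_iff, ← orderOf_eq_one_iff]
    exact Nat.eq_one_of_dvd_coprimes hcop (hx ▸ orderOf_map_dvd (QuotientGroup.mk' N) x)
      (index_eq_card N ▸ _root_.orderOf_dvd_natCard _)
  have hzN : zpowers (x : G) = N :=
    eq_of_le_of_card_ge (zpowers_le.mpr hxN) (by rw [Nat.card_zpowers, hx])
  exact hzN ▸ zpowers_le.mpr x.2

theorem zpowers_inf_eq_bot_of_notMem [Finite G] {x : G} (hx : (orderOf x).Prime)
    {H : Subgroup G} (hxH : x ∉ H) : zpowers x ⊓ H = ⊥ := by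
  have hdvd : Nat.card ↥(zpowers x ⊓ H) ∣ orderOf x :=
    Nat.card_zpowers x ▸ card_dvd_of_le inf_le_left
  rcases hx.eq_one_or_self_of_dvd _ hdvd with h1 | hx'
  · exact card_eq_one.mp h1
  · have hinf : zpowers x ⊓ H = zpowers x :=
      eq_of_le_of_card_ge inf_le_left (by rw [hx', Nat.card_zpowers])
    have hxinf : x ∈ zpowers x ⊓ H := by rw [hinf]; exact mem_zpowers x
    exact absurd hxinf.2 hxH

theorem card_eq_of_dvd_card_of_ne_top [Finite G] {m q : ℕ} (hq : q.Prime)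
    (hG : Nat.card G = m * q) {H : Subgroup G} (hm : m ∣ Nat.card H) (hH : H ≠ ⊤) :
    Nat.card H = m := by
  obtain ⟨e, he⟩ := hm
  have hm0 : 0 < m := Nat.pos_of_mul_pos_right (hG ▸ Nat.card_pos)
  have hdvd : e ∣ q := by
    rw [← Nat.mul_dvd_mul_iff_left hm0, ← he, ← hG]
    exact card_subgroup_dvd_card H
  rcases hq.eq_one_or_self_of_dvd e hdvd with rfl | rfl
  · rw [he, mul_one]
  · exact absurd ((card_eq_iff_eq_top H).mp (he.trans hG.symm)) hH

theorem mk_notMem_zpowers_mk [Finite G] {N : Subgroup G} [N.Normal] {a b g : G}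
    (hgen : closure {a, b, g} = ⊤) (hb : b ∈ N) (hlt : orderOf g < N.index) :
    (a : G ⧸ N) ∉ zpowers (g : G ⧸ N) := by
  intro ha
  have hle : closure {a, b, g} ≤ (zpowers (g : G ⧸ N)).comap (QuotientGroup.mk' N) := by
    rw [closure_le]
    rintro x (rfl | rfl | rfl)
    · exact ha
    · rw [SetLike.mem_coe, mem_comap, QuotientGroup.coe_mk', (QuotientGroup.eq_one_iff x).mpr hb]
      exact one_mem _
    · exact mem_zpowers _
  have htop : zpowers (g : G ⧸ N) = ⊤ := by
    rw [hgen, top_le_iff] at hle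
    rw [← map_comap_eq_self_of_surjective (QuotientGroup.mk'_surjective N) (zpowers _), hle,
      map_top_of_surjective _ (QuotientGroup.mk'_surjective N)]
  have hcard : N.index ≤ orderOf g := by
    rw [index_eq_card, ← card_top, ← htop, Nat.card_zpowers]
    exact Nat.le_of_dvd (orderOf_pos g) (orderOf_map_dvd (QuotientGroup.mk' N) g)
  omega

theorem closure_inf_zpowers_eq_bot [Finite G] {N : Subgroup G} [N.Normal] {b c g : G}
    (hb : b ∈ N) (hc : (orderOf (c : G ⧸ N)).Prime) (hcg : (c : G ⧸ N) ∉ zpowers (g : G ⧸ N))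
    (hNg : N ⊓ zpowers g = ⊥) : closure {b, c} ⊓ zpowers g = ⊥ := by
  have hle : closure {b, c} ⊓ zpowers g ≤
      (zpowers (c : G ⧸ N) ⊓ zpowers (g : G ⧸ N)).comap (QuotientGroup.mk' N) := by
    rw [comap_inf]
    refine inf_le_inf ((closure_le _).mpr ?_) (zpowers_le.mpr (mem_zpowers _))
    rintro x (rfl | rfl)
    · rw [SetLike.mem_coe, mem_comap, QuotientGroup.coe_mk', (QuotientGroup.eq_one_iff x).mpr hb]
      exact one_mem _
    · exact mem_zpowers _
  rw [zpowers_inf_eq_bot_of_notMem hc hcg, MonoidHom.comap_bot, QuotientGroup.ker_mk'] at hle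
  exact eq_bot_iff.mpr (hNg ▸ le_inf hle inf_le_right)

theorem IsComplement'.exists_pow_mul_mem [Finite G] {L : Subgroup G} {g : G}
    (hL : L.IsComplement' (zpowers g)) (a : G) : ∃ n < orderOf g, g ^ n * a ∈ L := by
  classical
  obtain ⟨⟨l, f⟩, hlf⟩ := hL.2 a⁻¹
  obtain ⟨n, hn, hf⟩ := Finset.mem_image.mp (mem_zpowers_iff_mem_range_orderOf.mp f.2)
  refine ⟨n, Finset.mem_range.mp hn, ?_⟩
  have hna : g ^ n * a = (l : G)⁻¹ := by
    rw [hf, eq_inv_iff_mul_eq_one, ← inv_inv a, ← hlf]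
    group
  exact hna ▸ inv_mem l.2

theorem exists_eq_closure_pow_mul [Finite G] {L : Subgroup G} {a b g : G}
    (hcard : Nat.card L * orderOf g = Nat.card G) (hLg : L ⊓ zpowers g = ⊥) (hb : b ∈ L)
    (hcard_le : ∀ k : ℕ, Nat.card L ≤ Nat.card (closure {b, g ^ k * a})) :
    ∃ k < orderOf g, L = closure {b, g ^ k * a} := by
  have hcompl : L.IsComplement' (zpowers g) :=
    isComplement'_of_card_mul_and_disjoint (by rwa [Nat.card_zpowers]) (disjoint_iff.mpr hLg)
  obtain ⟨k, hk, hkL⟩ := hcompl.exists_pow_mul_mem a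
  refine ⟨k, hk, (eq_of_le_of_card_ge ((closure_le _).mpr ?_) (hcard_le k)).symm⟩
  rintro x (rfl | rfl)
  exacts [hb, hkL]

theorem pow_eq_pow_of_pow_mul_mem {L : Subgroup G} {a g : G} {k k' : ℕ}
    (hL : L ⊓ zpowers g = ⊥) (hk : g ^ k * a ∈ L) (hk' : g ^ k' * a ∈ L) : g ^ k = g ^ k' := by
  have hmem : g ^ k * a * (g ^ k' * a)⁻¹ ∈ L ⊓ zpowers g := by
    refine mem_inf.mpr ⟨mul_mem hk (inv_mem hk'), ?_⟩
    rw [mul_inv_rev, mul_assoc, mul_inv_cancel_left]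
    exact mul_mem (pow_mem (mem_zpowers g) k) (inv_mem (pow_mem (mem_zpowers g) k'))
  rw [hL, mem_bot, mul_inv_eq_one] at hmem
  exact mul_right_cancel hmem

end Subgroup

theorem card_closure_pow_mul_eq_and_inf_zpowers_eq_bot {G : Type*} [Group G] [Finite G]
    {p q : ℕ} [Fact q.Prime] {a b g : G} (hcard : Nat.card G = p * q ^ 2) (hpq : p.Coprime q)
    (ha : orderOf a = q) (hb : orderOf b = p) (hg : orderOf g = q) (hga : Commute g a)
    [(zpowers b).Normal] (hNg : zpowers b ⊓ zpowers g = ⊥)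
    (hag : (a : G ⧸ zpowers b) ∉ zpowers (g : G ⧸ zpowers b)) (k : ℕ) :
    Nat.card (closure {b, g ^ k * a}) = p * q ∧ closure {b, g ^ k * a} ⊓ zpowers g = ⊥ := by
  set c := g ^ k * a with hc
  have hcq : c ^ q = 1 := by
    rw [hc, (hga.pow_left k).mul_pow, ← pow_mul, mul_comm k, pow_mul, ← hg,
      pow_orderOf_eq_one, one_pow, one_mul, hg, ← ha, pow_orderOf_eq_one]
  have hcg : (c : G ⧸ zpowers b) ∉ zpowers (g : G ⧸ zpowers b) := by
    rwa [hc, QuotientGroup.mk_mul, QuotientGroup.mk_pow,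
      mul_mem_cancel_left (pow_mem (mem_zpowers _) k)]
  have hc1 : (c : G ⧸ zpowers b) ≠ 1 := fun h => hcg (h ▸ one_mem _)
  have hcq' : orderOf c = q := orderOf_eq_prime hcq fun h => hc1 (by rw [h, QuotientGroup.mk_one])
  have hinf : closure {b, c} ⊓ zpowers g = ⊥ := by
    refine closure_inf_zpowers_eq_bot (mem_zpowers b) ?_ hcg hNg
    rw [orderOf_eq_prime (by rw [← QuotientGroup.mk_pow, hcq, QuotientGroup.mk_one]) hc1]
    exact Fact.out
  refine ⟨card_eq_of_dvd_card_of_ne_top (q := q) Fact.out (by rw [hcard]; ring) ?_ ?_, hinf⟩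
  · exact hpq.mul_dvd_of_dvd_of_dvd
      (hb ▸ orderOf_dvd_natCard _ (subset_closure (Set.mem_insert b _)))
      (hcq' ▸ orderOf_dvd_natCard _ (subset_closure (Set.mem_insert_of_mem b rfl)))
  · intro htop
    have hg1 : g ∈ closure {b, c} ⊓ zpowers g := mem_inf.mpr ⟨htop ▸ mem_top g, mem_zpowers g⟩
    rw [hinf, mem_bot, ← orderOf_eq_one_iff, hg] at hg1
    exact (Fact.out : q.Prime).ne_one hg1

theorem statement15_general (p q : ℕ) (hp : p.Prime) (hq : q.Prime) (hmod : p % q = 1)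
    (t h : (ZMod p)ˣ)
    {G' : Type*} [Group G'] [Finite G'] (a b g : G')
    (hcard : Nat.card G' = p * q ^ 2)
    (ha : orderOf a = q) (hb : orderOf b = p) (hg : orderOf g = q)
    (hab : a * b * a⁻¹ = b ^ (t : ZMod p).val)
    (hgb : g * b * g⁻¹ = b ^ (h : ZMod p).val)
    (hga : g * a * g⁻¹ = a)
    (hgen : Subgroup.closure {a, b, g} = (⊤ : Subgroup G')) :
    -- (1) every subgroup of order pq is normal
    (∀ L : Subgroup G', Nat.card L = p * q → L.Normal) ∧
    -- (2a) each L_k = ⟨b, g^k·a⟩ has order pq and meets F' = ⟨g⟩ trivially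
    (∀ kk : ℕ, kk < q →
      Nat.card (Subgroup.closure {b, g ^ kk * a} : Subgroup G') = p * q ∧
      Subgroup.closure {b, g ^ kk * a} ⊓ Subgroup.zpowers g = (⊥ : Subgroup G')) ∧
    -- (2b) every subgroup of order pq meeting F' trivially is some L_k
    (∀ L : Subgroup G', Nat.card L = p * q → L ⊓ Subgroup.zpowers g = ⊥ →
      ∃ kk : ℕ, kk < q ∧ L = Subgroup.closure {b, g ^ kk * a}) ∧
    -- (2c) the subgroups L_0, …, L_{q−1} are pairwise distinct
    (∀ kk kk' : ℕ, kk < q → kk' < q →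
      (Subgroup.closure {b, g ^ kk * a} : Subgroup G') = Subgroup.closure {b, g ^ kk' * a} →
        kk = kk') := by
  have := Fact.mk hq
  have hpq : p.Coprime q := (Nat.coprime_primes hp hq).mpr fun hpq' => by simp [hpq'] at hmod
  have hNcard : Nat.card (zpowers b) = p := by rw [Nat.card_zpowers, hb]
  have : (zpowers b).Normal := normal_zpowers_of_conj_mem hgen <| by
    rintro x (rfl | rfl | rfl)
    · exact hab ▸ pow_mem (mem_zpowers b) _
    · simp [mem_zpowers]
    · exact hgb ▸ pow_mem (mem_zpowers b) _
  have hindex : (zpowers b).index = q ^ 2 :=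
    Nat.eq_of_mul_eq_mul_left hp.pos (by rw [← hNcard, card_mul_index, hcard, hNcard])
  have hNg : zpowers b ⊓ zpowers g = ⊥ :=
    disjoint_iff.mp (disjoint_of_coprime_natCard (by rwa [hNcard, Nat.card_zpowers, hg]))
  have hag := mk_notMem_zpowers_mk hgen (mem_zpowers b) (by rw [hg, hindex]; nlinarith [hq.two_le])
  have hLk := card_closure_pow_mul_eq_and_inf_zpowers_eq_bot hcard hpq ha hb hg
    (mul_inv_eq_iff_eq_mul.mp hga) hNg hag
  have hcomm : IsMulCommutative (G' ⧸ zpowers b) :=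
    IsPGroup.isMulCommutative_of_card_eq_prime_sq (index_eq_card (zpowers b) ▸ hindex)
  have hNle (L : Subgroup G') (hL : Nat.card L = p * q) : zpowers b ≤ L :=
    le_of_card_prime_dvd_card (hNcard ▸ hp) (by rw [hNcard, hindex]; exact hpq.pow_right 2)
      (by rw [hNcard, hL]; exact dvd_mul_right p q)
  refine ⟨fun L hL => Normal.of_commutator_le _
    ((Normal.quotient_commutative_iff_commutator_le.mp hcomm).trans (hNle L hL)),
    fun k _ => hLk k, fun L hL hLg => ?_, fun k k' hk hk' hkk' => ?_⟩
  · rw [← hg]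
    exact exists_eq_closure_pow_mul (by rw [hL, hg, hcard]; ring) hLg
      (hNle L hL (mem_zpowers b)) fun k => by rw [hL, (hLk k).1]
  · refine pow_injOn_Iio_orderOf (hg ▸ hk) (hg ▸ hk') (pow_eq_pow_of_pow_mul_mem (hLk k').2 ?_
      (subset_closure (Set.mem_insert_of_mem b rfl)))
    exact hkk' ▸ subset_closure (Set.mem_insert_of_mem b rfl)

/-- Let `p, q` be primes with `p ≡ 1 (mod q)`, and `t, h` elements of multiplicative
order `q` in `(Z/p)ˣ`.  Let `G'` be the group of order `pq²` generated by elements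
`a, b, g` of orders `q, p, q` subject to `a·b·a⁻¹ = b^t`, `g·b·g⁻¹ = b^h` and
`g·a·g⁻¹ = a`, i.e. `G' = Z/q ⋉ Γ'` where `Γ' = ⟨a, b : a^q = b^p = 1, aba⁻¹ = b^t⟩`
and the generator `g` of `Z/q` acts by `a ↦ a`, `b ↦ b^h`; let `F' = ⟨g⟩`.  Then:
(1) every subgroup of `G'` of order `pq` is normal in `G'`; and
(2) the subgroups `L ≤ G'` of order `pq` with `L ∩ F' = 1` are precisely the subgroups
`L_k = ⟨b, g^k·a⟩` for `k = 0, 1, …, q−1`, and these `q` subgroups are pairwise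
distinct. -/
theorem statement15 (p q : ℕ) (hp : p.Prime) (hq : q.Prime) (hmod : p % q = 1)
    (t h : (ZMod p)ˣ) (ht : orderOf t = q) (hh : orderOf h = q)
    {G' : Type*} [Group G'] [Finite G'] (a b g : G')
    (hcard : Nat.card G' = p * q ^ 2)
    (ha : orderOf a = q) (hb : orderOf b = p) (hg : orderOf g = q)
    (hab : a * b * a⁻¹ = b ^ (t : ZMod p).val)
    (hgb : g * b * g⁻¹ = b ^ (h : ZMod p).val)
    (hga : g * a * g⁻¹ = a)
    (hgen : Subgroup.closure {a, b, g} = (⊤ : Subgroup G')) :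
    -- (1) every subgroup of order pq is normal
    (∀ L : Subgroup G', Nat.card L = p * q → L.Normal) ∧
    -- (2a) each L_k = ⟨b, g^k·a⟩ has order pq and meets F' = ⟨g⟩ trivially
    (∀ kk : ℕ, kk < q →
      Nat.card (Subgroup.closure {b, g ^ kk * a} : Subgroup G') = p * q ∧
      Subgroup.closure {b, g ^ kk * a} ⊓ Subgroup.zpowers g = (⊥ : Subgroup G')) ∧
    -- (2b) every subgroup of order pq meeting F' trivially is some L_k
    (∀ L : Subgroup G', Nat.card L = p * q → L ⊓ Subgroup.zpowers g = ⊥ →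
      ∃ kk : ℕ, kk < q ∧ L = Subgroup.closure {b, g ^ kk * a}) ∧
    -- (2c) the subgroups L_0, …, L_{q−1} are pairwise distinct
    (∀ kk kk' : ℕ, kk < q → kk' < q →
      (Subgroup.closure {b, g ^ kk * a} : Subgroup G') = Subgroup.closure {b, g ^ kk' * a} →
        kk = kk') :=
  statement15_general p q hp hq hmod t h a b g hcard ha hb hg hab hgb hga hgen
end
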